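/- arXiv:2509.02279 — 8 statements merged into one kernel-verified Lean document; each statement's English description precedes it below -/
import Mathlib

section
/- Let X be a finite set, D* a probability distribution on X × {0,1} with random pair (x, y*), and p : X → [0,1] a predictor. Then ECE(p, D*) = TV(J*, J^p), where TV denotes total variation distance: TV(D1, D2) = max over (measurable) subsets S of |D1(S) − D2(S)|. -/
open scoped Classical
open Finset Set

noncomputable section

/-- `D` is a probability distribution on `X × {0,1}` (labels as `Bool`). -/
def IsDistribution {X : Type} [Fintype X] (D : X × Bool → ℝ) : Prop :=
  (∀ z, 0 ≤ D z) ∧ (∑ z : X × Bool, D z) = 1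

/-- A predictor takes values in `[0,1]`. -/
def IsPredictor {X : Type} (p : X → ℝ) : Prop := ∀ x, p x ∈ Set.Icc (0 : ℝ) 1

/-- Marginal mass of a point `x`. -/
def massx {X : Type} (D : X × Bool → ℝ) (x : X) : ℝ := D (x, false) + D (x, true)

/-- The recalibration `p̂(x) = E[y | p(x)]`. -/
def phat {X : Type} [Fintype X] (D : X × Bool → ℝ) (p : X → ℝ) (x : X) : ℝ :=
  (∑ x' : X, if p x' = p x then D (x', true) else 0) /
    (∑ x' : X, if p x' = p x then massx D x' else 0)

/-- The expected calibration error `ECE(p, D*) = E |E[y* | p(x)] - p(x)|`. -/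
def ECE {X : Type} [Fintype X] (D : X × Bool → ℝ) (p : X → ℝ) : ℝ :=
  ∑ x : X, massx D x * |phat D p x - p x|

/-- The measure that `J*`, the joint distribution of `(p(x), y*)`,
assigns to a subset `S ⊆ [0,1] × {0,1}`. -/
def jointStarMeas {X : Type} [Fintype X] (D : X × Bool → ℝ) (p : X → ℝ)
    (S : Set (ℝ × Bool)) : ℝ :=
  ∑ z : X × Bool, if (p z.1, z.2) ∈ S then D z else 0

/-- The measure that `J^p`, the joint distribution of `(p(x), y^p)` (where, conditioned
on `x`, `y^p` is Bernoulli with parameter `p(x)`), assigns to a subset `S ⊆ [0,1] × {0,1}`. -/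
def jointPredMeas {X : Type} [Fintype X] (D : X × Bool → ℝ) (p : X → ℝ)
    (S : Set (ℝ × Bool)) : ℝ :=
  ∑ z : X × Bool,
    if (p z.1, z.2) ∈ S then massx D z.1 * (if z.2 then p z.1 else 1 - p z.1) else 0

/-- per-point signed discrepancy on the `true` label -/
def dtr {X : Type} [Fintype X] (D : X × Bool → ℝ) (p : X → ℝ) (x : X) : ℝ :=
  D (x, true) - massx D x * p x

/-- fiberwise signed discrepancy -/
def Fv {X : Type} [Fintype X] (D : X × Bool → ℝ) (p : X → ℝ) (v : ℝ) : ℝ :=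
  ∑ x : X, if p x = v then dtr D p x else 0

lemma jointDiff_eq {X : Type} [Fintype X] (D : X × Bool → ℝ) (p : X → ℝ)
    (S : Set (ℝ × Bool)) :
    jointStarMeas D p S - jointPredMeas D p S =
      ∑ x : X, ((if (p x, true) ∈ S then (1:ℝ) else 0)
        - (if (p x, false) ∈ S then (1:ℝ) else 0)) * dtr D p x := by
  unfold jointStarMeas jointPredMeas
  rw [Fintype.sum_prod_type, Fintype.sum_prod_type, ← Finset.sum_sub_distrib]
  refine Finset.sum_congr rfl fun x _ => ?_
  rw [Fintype.sum_bool, Fintype.sum_bool]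
  simp only [dtr, massx, if_true, if_false, Bool.cond_true]
  split_ifs <;> (first | ring1 | exact False.elim ‹False›)

lemma sum_group {X : Type} [Fintype X] (D : X × Bool → ℝ) (p : X → ℝ) (c : ℝ → ℝ) :
    ∑ x : X, c (p x) * dtr D p x = ∑ v ∈ Finset.univ.image p, c v * Fv D p v := by
  refine (Finset.sum_image' _ ?_).symm
  intro x _
  rw [Fv, Finset.sum_filter, Finset.mul_sum]
  refine Finset.sum_congr rfl fun y _ => ?_
  split_ifs with h
  · rw [h]
  · ring

lemma ece_eq_sum {X : Type} [Fintype X] (D : X × Bool → ℝ) (hD : IsDistribution D)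
    (p : X → ℝ) :
    ECE D p = ∑ v ∈ Finset.univ.image p, |Fv D p v| := by
  rw [ECE]
  refine (Finset.sum_image' _ ?_).symm
  intro c _
  set M : ℝ := ∑ x' : X, if p x' = p c then massx D x' else 0 with hM
  set T : ℝ := ∑ x' : X, if p x' = p c then D (x', true) else 0 with hT
  have hFv : Fv D p (p c) = T - p c * M := by
    rw [Fv, hT, hM, Finset.mul_sum, ← Finset.sum_sub_distrib]
    refine Finset.sum_congr rfl fun y _ => ?_
    split_ifs with h
    · rw [dtr, h]; ring
    · ring
  have hmass_nonneg : ∀ x : X, 0 ≤ massx D x := fun x => by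
    rw [massx]; exact add_nonneg (hD.1 _) (hD.1 _)
  have hMnonneg : 0 ≤ M := Finset.sum_nonneg fun x _ => by
    split_ifs
    · exact hmass_nonneg x
    · exact le_rfl
  have hRHS : ∑ x ∈ Finset.univ.filter (fun x => p x = p c),
      massx D x * |phat D p x - p x| = M * |phat D p c - p c| := by
    rw [hM, Finset.sum_filter, Finset.sum_mul]
    refine Finset.sum_congr rfl fun y _ => ?_
    split_ifs with h
    · have hphat : phat D p y = phat D p c := by
        rw [phat, phat, h]
      rw [hphat, h]
    · ring
  rw [hRHS, hFv]
  by_cases hM0 : M = 0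
  · have hT0 : T = 0 := by
      rw [hT]
      refine Finset.sum_eq_zero fun x _ => ?_
      split_ifs with h
      · -- massx D x = 0 from M = 0
        have hx0 : massx D x = 0 := by
          have := (Finset.sum_eq_zero_iff_of_nonneg (fun y _ => by
            split_ifs
            · exact hmass_nonneg y
            · exact le_rfl)).mp (hM ▸ hM0) x (Finset.mem_univ x)
          simpa [h] using this
        have h1 : D (x, true) ≤ massx D x := by
          rw [massx]; linarith [hD.1 (x, false)]
        exact le_antisymm (hx0 ▸ h1) (hD.1 _)
      · rfl
    rw [hM0, hT0]
    simp
  · have hMpos : 0 < M := lt_of_le_of_ne hMnonneg (Ne.symm hM0)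
    rw [phat, ← hT, ← hM]
    rw [show M * |T / M - p c| = |M| * |T / M - p c| by rw [abs_of_pos hMpos]]
    rw [← abs_mul]
    congr 1
    field_simp

lemma diff_le_ece {X : Type} [Fintype X] (D : X × Bool → ℝ) (hD : IsDistribution D)
    (p : X → ℝ) (S : Set (ℝ × Bool)) :
    |jointStarMeas D p S - jointPredMeas D p S| ≤ ECE D p := by
  rw [jointDiff_eq, sum_group D p (fun v => (if (v, true) ∈ S then (1:ℝ) else 0) - (if (v, false) ∈ S then (1:ℝ) else 0)), ece_eq_sum D hD]
  refine le_trans (Finset.abs_sum_le_sum_abs _ _) ?_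
  refine Finset.sum_le_sum fun v _ => ?_
  rw [abs_mul]
  have hc : |(if (v, true) ∈ S then (1:ℝ) else 0) - (if (v, false) ∈ S then (1:ℝ) else 0)| ≤ 1 := by
    split_ifs <;> norm_num
  calc |(if (v, true) ∈ S then (1:ℝ) else 0) - (if (v, false) ∈ S then (1:ℝ) else 0)| * |Fv D p v|
      ≤ 1 * |Fv D p v| := by
        exact mul_le_mul_of_nonneg_right hc (abs_nonneg _)
    _ = |Fv D p v| := one_mul _

/-- `ECE(p, D*) = TV(J*, J^p)`, where
`TV(D1, D2) = max_S |D1(S) - D2(S)|`. -/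
theorem ece_eq_tv
    {X : Type} [Fintype X] (D : X × Bool → ℝ) (hD : IsDistribution D)
    (p : X → ℝ) (hp : IsPredictor p) :
    IsGreatest
      {d : ℝ | ∃ S : Set (ℝ × Bool), d = |jointStarMeas D p S - jointPredMeas D p S|}
      (ECE D p) := by
  constructor
  · -- membership: take the signed set
    refine ⟨{z : ℝ × Bool | if z.2 then 0 ≤ Fv D p z.1 else Fv D p z.1 < 0}, ?_⟩
    have hΔ : jointStarMeas D p {z : ℝ × Bool | if z.2 then 0 ≤ Fv D p z.1 else Fv D p z.1 < 0}
        - jointPredMeas D p {z : ℝ × Bool | if z.2 then 0 ≤ Fv D p z.1 else Fv D p z.1 < 0}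
        = ECE D p := by
      rw [jointDiff_eq, sum_group D p (fun v => (if (v, true) ∈ {z : ℝ × Bool | if z.2 then 0 ≤ Fv D p z.1 else Fv D p z.1 < 0} then (1:ℝ) else 0) - (if (v, false) ∈ {z : ℝ × Bool | if z.2 then 0 ≤ Fv D p z.1 else Fv D p z.1 < 0} then (1:ℝ) else 0)), ece_eq_sum D hD]
      refine Finset.sum_congr rfl fun v _ => ?_
      have ht : ((v, true) ∈ {z : ℝ × Bool | if z.2 then 0 ≤ Fv D p z.1 else Fv D p z.1 < 0}) = (0 ≤ Fv D p v) := by simp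
      have hf : ((v, false) ∈ {z : ℝ × Bool | if z.2 then 0 ≤ Fv D p z.1 else Fv D p z.1 < 0}) = (Fv D p v < 0) := by simp
      simp only [ht, hf]
      by_cases h : 0 ≤ Fv D p v
      · rw [if_pos h, if_neg (not_lt.mpr h), abs_of_nonneg h]; ring
      · rw [if_neg h, if_pos (not_le.mp h), abs_of_neg (not_le.mp h)]; ring
    rw [hΔ]
    have : 0 ≤ ECE D p := by
      rw [ece_eq_sum D hD]
      exact Finset.sum_nonneg fun v _ => abs_nonneg _
    rw [abs_of_nonneg this]
  · rintro d ⟨S, rfl⟩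
    exact diff_le_ece D hD p S
end
end

section
/- Let X be a finite set, D* a probability distribution on X × {0,1} with random pair (x, y*), and p : X → [0,1] a predictor. Then EMD(J*, J^p)/2 ≤ smCE(p, D*) ≤ EMD(J*, J^p), where EMD is the earthmover (1-Wasserstein) distance between distributions on [0,1] × {0,1} with respect to the metric ℓ1((v,y),(v',y')) = |v − v'| + |y − y'|. -/
/-!
`smCE ≤ EMD` is weak duality: for `w ∈ L` the function `h(v, y) = (y - 1/2) w(v)` is
`1`-Lipschitz for `ℓ1`, and `E[w(p(x)) (y* - p(x))] = E h(J*) - E h(J^p)`, which every coupling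
bounds by its cost.

`EMD ≤ 2 smCE` is Kantorovich duality: the cost of some coupling is at most the supremum of
`E f(J^p) - E g(J*)` over pairs with `f(z') - g(z) ≤ ℓ1(z, z')`. On a finite space this follows from
Sion's minimax theorem for the Lagrangian that relaxes the second marginal, followed by a
compactness argument that lets the multipliers' bound tend to infinity. For such a pair, the
McShane extension `G` of `f` is `ℓ1`-Lipschitz on `ℝ × {0,1}` and lies between `f` and `g` on
the support, and `w = (G(·,1) - G(·,0))/2 ∈ L` satisfies
`E G(J*) - E G(J^p) = 2 E[w(p(x)) (y* - p(x))]`.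
-/

open scoped Classical
open Finset Set

noncomputable section

/-- Numerical value of a Boolean label. -/
def yval (y : Bool) : ℝ := if y then 1 else 0

/-- Expectation of `f(x, y)` under `D`. -/
def expval {X : Type} [Fintype X] (D : X × Bool → ℝ) (f : X × Bool → ℝ) : ℝ :=
  ∑ z : X × Bool, D z * f z

/-- The distribution of `(x, y^p)` where, conditioned on `x`, the label `y^p` is
Bernoulli with parameter `p(x)`; its pushforward under `(x,y) ↦ (p x, y)` is `J^p`. -/
def bernD {X : Type} (D : X × Bool → ℝ) (p : X → ℝ) : X × Bool → ℝ :=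
  fun z => massx D z.1 * (if z.2 then p z.1 else 1 - p z.1)

/-- `γ` is a coupling of the two distributions `D1` and `D2` on `X × Bool`. -/
def IsCoupling {X : Type} [Fintype X] (D1 D2 : X × Bool → ℝ)
    (γ : (X × Bool) × (X × Bool) → ℝ) : Prop :=
  (∀ w, 0 ≤ γ w) ∧ (∀ z, (∑ z' : X × Bool, γ (z, z')) = D1 z) ∧
    (∀ z', (∑ z : X × Bool, γ (z, z')) = D2 z')

/-- The earthmover (1-Wasserstein) distance between `J*` and `J^p`, with respect to the
metric `ℓ1((v,y),(v',y')) = |v - v'| + |y - y'|` on `[0,1] × {0,1}`: the infimum, over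
couplings of the two joint distributions, of the expected `ℓ1` cost. -/
def EMD {X : Type} [Fintype X] (D : X × Bool → ℝ) (p : X → ℝ) : ℝ :=
  sInf {c : ℝ | ∃ γ : (X × Bool) × (X × Bool) → ℝ, IsCoupling D (bernD D p) γ ∧
    c = ∑ w : (X × Bool) × (X × Bool),
      γ w * (|p w.1.1 - p w.2.1| + |yval w.1.2 - yval w.2.2|)}

/-- The smooth calibration error `smCE(p, D*) = max_{w ∈ L} |E[w(p(x)) · (y* - p(x))]|`,
where `L` is the family of `1`-Lipschitz functions from `[0,1]` to `[-1,1]`. -/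
def smCE {X : Type} [Fintype X] (D : X × Bool → ℝ) (p : X → ℝ) : ℝ :=
  sSup {e : ℝ | ∃ w : ℝ → ℝ,
    (∀ v ∈ Set.Icc (0 : ℝ) 1, w v ∈ Set.Icc (-1 : ℝ) 1) ∧
    (∀ v ∈ Set.Icc (0 : ℝ) 1, ∀ v' ∈ Set.Icc (0 : ℝ) 1, |w v - w v'| ≤ |v - v'|) ∧
    e = |expval D (fun z => w (p z.1) * (yval z.2 - p z.1))|}

section KantorovichDuality

variable {Z : Type} [Fintype Z]

lemma sum_mul_sub_eq_of_marginals {γ : Z × Z → ℝ} {μ ν : Z → ℝ}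
    (hrow : ∀ z, ∑ z', γ (z, z') = μ z) (hcol : ∀ z', ∑ z, γ (z, z') = ν z') (F G : Z → ℝ) :
    ∑ e, γ e * (F e.1 - G e.2) = ∑ z, μ z * F z - ∑ z, ν z * G z := by
  simp only [mul_sub, sum_sub_distrib]
  congr 1
  · simp_rw [Fintype.sum_prod_type, ← sum_mul, hrow]
  · simp_rw [Fintype.sum_prod_type_right, ← sum_mul, hcol]

def rowPlans (μ : Z → ℝ) : Set (Z × Z → ℝ) :=
  {γ | (∀ e, 0 ≤ γ e) ∧ ∀ z, ∑ z', γ (z, z') = μ z}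

lemma convex_rowPlans (μ : Z → ℝ) : Convex ℝ (rowPlans μ) := by
  rintro γ ⟨hγ0, hγμ⟩ γ' ⟨hγ'0, hγ'μ⟩ a b ha hb hab
  refine ⟨fun e => ?_, fun z => ?_⟩
  · simp only [Pi.add_apply, Pi.smul_apply, smul_eq_mul]
    exact add_nonneg (mul_nonneg ha (hγ0 e)) (mul_nonneg hb (hγ'0 e))
  · simp only [Pi.add_apply, Pi.smul_apply, smul_eq_mul, sum_add_distrib, ← mul_sum, hγμ, hγ'μ]
    rw [← add_mul, hab, one_mul]

lemma isCompact_rowPlans (μ : Z → ℝ) : IsCompact (rowPlans μ) := by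
  have hclosed : IsClosed (rowPlans μ) := by
    simp only [rowPlans, Set.ofPred_and, Set.ofPred_forall]
    exact (isClosed_iInter fun e => isClosed_le continuous_const (continuous_apply e)).inter
      (isClosed_iInter fun z => isClosed_eq (by fun_prop) continuous_const)
  refine (isCompact_Icc (a := 0) (b := fun e : Z × Z => μ e.1)).of_isClosed_subset hclosed ?_
  rintro γ ⟨hγ0, hγμ⟩
  refine ⟨hγ0, fun e => ?_⟩
  show γ e ≤ μ e.1
  rw [← hγμ e.1]
  exact single_le_sum (f := fun z' => γ (e.1, z')) (fun z' _ => hγ0 _) (mem_univ e.2)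

/-- Lagrangian of the transport problem over `rowPlans μ`, with multiplier `f` for the
second-marginal constraint. -/
def transportLagrangian (c : Z → Z → ℝ) (ν : Z → ℝ) (γ : Z × Z → ℝ) (f : Z → ℝ) : ℝ :=
  ∑ z, ν z * f z + ∑ e, γ e * (c e.1 e.2 - f e.2)

lemma transportLagrangian_eq (c : Z → Z → ℝ) (ν : Z → ℝ) (γ : Z × Z → ℝ) (f : Z → ℝ) :
    transportLagrangian c ν γ f
      = ∑ e, γ e * c e.1 e.2 + ∑ z, f z * (ν z - ∑ z₀, γ (z₀, z)) := by
  have hcol : ∑ e, γ e * f e.2 = ∑ z, f z * ∑ z₀, γ (z₀, z) := by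
    rw [Fintype.sum_prod_type_right]
    exact sum_congr rfl fun z _ => by rw [mul_sum]; exact sum_congr rfl fun _ _ => mul_comm _ _
  simp only [transportLagrangian, mul_sub, sum_sub_distrib, hcol, mul_comm (ν _)]
  ring

lemma exists_isSaddlePointOn_transportLagrangian (c : Z → Z → ℝ) {μ : Z → ℝ}
    (hμ : (rowPlans μ).Nonempty) (ν : Z → ℝ) {M : ℝ} (hM : 0 ≤ M) :
    ∃ γ ∈ rowPlans μ, ∃ f ∈ Set.Icc (fun _ : Z => -M) (fun _ => M),
      IsSaddlePointOn (rowPlans μ) (Set.Icc (fun _ : Z => -M) (fun _ => M))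
        (transportLagrangian c ν) γ f := by
  have haff_γ (f : Z → ℝ) : (fun γ => transportLagrangian c ν γ f)
      = fun γ => Fintype.linearCombination ℝ (fun e : Z × Z => c e.1 e.2 - f e.2) γ
        + ∑ z, ν z * f z := by
    ext γ; simp [transportLagrangian, Fintype.linearCombination_apply, add_comm]
  have haff_f (γ : Z × Z → ℝ) : (fun f => transportLagrangian c ν γ f)
      = fun f => Fintype.linearCombination ℝ (fun z => ν z - ∑ z₀, γ (z₀, z)) f
        + ∑ e, γ e * c e.1 e.2 := by
    ext f; simp [transportLagrangian_eq, Fintype.linearCombination_apply, add_comm]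
  have hY : (Set.Icc (fun _ : Z => -M) (fun _ => M)).Nonempty :=
    Set.nonempty_Icc.2 fun _ => by linarith
  refine Sion.exists_isSaddlePointOn hμ (convex_rowPlans μ) (isCompact_rowPlans μ)
    (fun f _ => ?_) (fun f _ => ?_) (convex_Icc _ _) hY isCompact_Icc (fun γ _ => ?_)
    (fun γ _ => ?_)
  · rw [haff_γ]; exact (Continuous.continuousOn (by fun_prop)).lowerSemicontinuousOn
  · rw [haff_γ]; exact ((LinearMap.convexOn _ (convex_rowPlans μ)).add_const _).quasiconvexOn
  · rw [haff_f]; exact (Continuous.continuousOn (by fun_prop)).upperSemicontinuousOn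
  · rw [haff_f]; exact ((LinearMap.concaveOn _ (convex_Icc _ _)).add_const _).quasiconcaveOn

/-- `γ` sends each `z` to a maximiser of `f z' - c z z'`, and `g` is the `c`-transform of `f`. -/
lemma exists_mem_rowPlans_transportLagrangian_eq (c : Z → Z → ℝ) {μ : Z → ℝ}
    (hμ : ∀ z, 0 ≤ μ z) (ν f : Z → ℝ) :
    ∃ γ ∈ rowPlans μ, ∃ g : Z → ℝ, (∀ z z', f z' - g z ≤ c z z') ∧
      transportLagrangian c ν γ f = ∑ z, ν z * f z - ∑ z, μ z * g z := by
  choose σ hσ using fun z : Z => @Finite.exists_max _ _ _ ⟨z⟩ _ fun z' => f z' - c z z'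
  refine ⟨fun e => if e.2 = σ e.1 then μ e.1 else 0, ⟨fun e => ?_, fun z => ?_⟩,
    fun z => f (σ z) - c z (σ z), fun z z' => by linarith [hσ z z'], ?_⟩
  · dsimp only; split_ifs <;> simp [hμ]
  · simp
  · simp only [transportLagrangian, Fintype.sum_prod_type, ite_mul, zero_mul, sum_ite_eq',
      Finset.mem_univ, if_true, mul_sub, sum_sub_distrib]
    ring

lemma exists_mem_rowPlans_penalized_cost_le {c : Z → Z → ℝ} {μ ν : Z → ℝ} {B : ℝ}
    (hμ : ∀ z, 0 ≤ μ z)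
    (hB : ∀ f g : Z → ℝ, (∀ z z', f z' - g z ≤ c z z') → ∑ z, ν z * f z - ∑ z, μ z * g z ≤ B)
    {M : ℝ} (hM : 0 ≤ M) :
    ∃ γ ∈ rowPlans μ, ∑ e, γ e * c e.1 e.2 + M * ∑ z, |ν z - ∑ z₀, γ (z₀, z)| ≤ B := by
  obtain ⟨γ₀, hγ₀, -⟩ := exists_mem_rowPlans_transportLagrangian_eq c hμ ν 0
  obtain ⟨γ, hγ, f, -, hsaddle⟩ :=
    exists_isSaddlePointOn_transportLagrangian c ⟨γ₀, hγ₀⟩ ν hM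
  obtain ⟨γf, hγf, g, hfg, hγfL⟩ := exists_mem_rowPlans_transportLagrangian_eq c hμ ν f
  -- the multiplier that turns the Lagrangian into the penalized cost
  set s : Z → ℝ := fun z => if ∑ z₀, γ (z₀, z) ≤ ν z then M else -M
  have hs : s ∈ Set.Icc (fun _ : Z => -M) (fun _ => M) :=
    ⟨fun z => by dsimp [s]; split_ifs <;> linarith, fun z => by dsimp [s]; split_ifs <;> linarith⟩
  have hpenalty : M * ∑ z, |ν z - ∑ z₀, γ (z₀, z)| = ∑ z, s z * (ν z - ∑ z₀, γ (z₀, z)) := by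
    rw [mul_sum]
    refine sum_congr rfl fun z _ => ?_
    dsimp [s]
    split_ifs with h
    · rw [abs_of_nonneg (by linarith)]
    · rw [abs_of_neg (by linarith)]; ring
  refine ⟨γ, hγ, ?_⟩
  calc ∑ e, γ e * c e.1 e.2 + M * ∑ z, |ν z - ∑ z₀, γ (z₀, z)|
      = transportLagrangian c ν γ s := by rw [transportLagrangian_eq, hpenalty]
    _ ≤ transportLagrangian c ν γf f := hsaddle γf hγf s hs
    _ ≤ B := hγfL ▸ hB f g hfg

/-- The nontrivial half of finite Kantorovich duality. -/
lemma exists_coupling_cost_le {c : Z → Z → ℝ} {μ ν : Z → ℝ} {B : ℝ}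
    (hc : ∀ z z', 0 ≤ c z z') (hμ : ∀ z, 0 ≤ μ z)
    (hB : ∀ f g : Z → ℝ, (∀ z z', f z' - g z ≤ c z z') → ∑ z, ν z * f z - ∑ z, μ z * g z ≤ B) :
    ∃ γ : Z × Z → ℝ, ((∀ e, 0 ≤ γ e) ∧ (∀ z, ∑ z', γ (z, z') = μ z) ∧
      ∀ z', ∑ z, γ (z, z') = ν z') ∧ ∑ e, γ e * c e.1 e.2 ≤ B := by
  set cost : (Z × Z → ℝ) → ℝ := fun γ => ∑ e, γ e * c e.1 e.2
  set defect : (Z × Z → ℝ) → ℝ := fun γ => ∑ z, |ν z - ∑ z₀, γ (z₀, z)|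
  have hcost_nonneg : ∀ γ ∈ rowPlans μ, 0 ≤ cost γ := fun γ hγ =>
    sum_nonneg fun e _ => mul_nonneg (hγ.1 e) (hc _ _)
  have hdefect_nonneg : ∀ γ, 0 ≤ defect γ := fun γ => sum_nonneg fun _ _ => abs_nonneg _
  set A := rowPlans μ ∩ {γ | cost γ ≤ B}
  have hA : IsCompact A :=
    (isCompact_rowPlans μ).inter_right (isClosed_le (f := cost) (by fun_prop) continuous_const)
  obtain ⟨γ₀, hγ₀, hγ₀B⟩ := exists_mem_rowPlans_penalized_cost_le hμ hB le_rfl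
  obtain ⟨γ, ⟨hγ, hγB⟩, hγmin⟩ := hA.exists_isMinOn
    ⟨γ₀, hγ₀, by simpa using hγ₀B⟩
    (Continuous.continuousOn (f := defect) (by fun_prop))
  -- a plan of penalized cost `≤ B` with penalty `M` has defect `≤ B / M`, so the least defect on
  -- `A` cannot be positive
  have hdefect : defect γ = 0 := by
    by_contra hne
    have hB0 : 0 ≤ B := (hcost_nonneg γ hγ).trans hγB
    set M := (B + 1) / defect γ
    have hM : 0 ≤ M := div_nonneg (by linarith) (hdefect_nonneg γ)
    obtain ⟨γ₁, hγ₁, hγ₁B⟩ := exists_mem_rowPlans_penalized_cost_le hμ hB hM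
    change cost γ₁ + M * defect γ₁ ≤ B at hγ₁B
    have hpenalty := mul_nonneg hM (hdefect_nonneg γ₁)
    have hγ₁A : γ₁ ∈ A := ⟨hγ₁, show cost γ₁ ≤ B by linarith⟩
    have hmin := mul_le_mul_of_nonneg_left (isMinOn_iff.1 hγmin γ₁ hγ₁A) hM
    have hMγ : M * defect γ = B + 1 := div_mul_cancel₀ _ hne
    linarith [hcost_nonneg γ₁ hγ₁]
  refine ⟨γ, ⟨hγ.1, hγ.2, fun z' => ?_⟩, hγB⟩
  have := (sum_eq_zero_iff_of_nonneg fun z _ => abs_nonneg _).1 hdefect z' (Finset.mem_univ _)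
  exact (sub_eq_zero.1 (abs_eq_zero.1 this)).symm

end KantorovichDuality

section Calibration

variable {X : Type}

def l1Cost (p : X → ℝ) (z z' : X × Bool) : ℝ :=
  |p z.1 - p z'.1| + |yval z.2 - yval z'.2|

lemma l1Cost_nonneg (p : X → ℝ) (z z' : X × Bool) : 0 ≤ l1Cost p z z' := by
  unfold l1Cost; positivity

/-- The class `L` over which `smCE` takes its supremum. -/
def IsSmoothWeight (w : ℝ → ℝ) : Prop :=
  (∀ v ∈ Set.Icc (0 : ℝ) 1, w v ∈ Set.Icc (-1 : ℝ) 1) ∧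
    ∀ v ∈ Set.Icc (0 : ℝ) 1, ∀ v' ∈ Set.Icc (0 : ℝ) 1, |w v - w v'| ≤ |v - v'|

lemma isSmoothWeight_of_le_add {G : ℝ → Bool → ℝ}
    (hG : ∀ v v' y y', G v y ≤ G v' y' + (|v - v'| + |yval y - yval y'|)) :
    IsSmoothWeight fun v => (G v true - G v false) / 2 := by
  have hjump (v : ℝ) : |G v true - G v false| ≤ 1 := by
    have h₁ := hG v v true false
    have h₂ := hG v v false true
    norm_num [yval] at h₁ h₂
    exact abs_le.2 ⟨by linarith, by linarith⟩
  refine ⟨fun v _ => ?_, fun v _ v' _ => ?_⟩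
  · obtain ⟨h₁, h₂⟩ := abs_le.1 (hjump v)
    constructor <;> linarith
  · have h₁ := hG v v' true true
    have h₂ := hG v' v true true
    have h₃ := hG v v' false false
    have h₄ := hG v' v false false
    rw [abs_sub_comm v' v] at h₂ h₄
    norm_num at h₁ h₂ h₃ h₄
    exact abs_le.2 ⟨by linarith, by linarith⟩

lemma abs_sub_le_l1Cost {p : X → ℝ} (hp : IsPredictor p) {w : ℝ → ℝ} (hw : IsSmoothWeight w)
    (z z' : X × Bool) :
    |(yval z.2 - 1 / 2) * w (p z.1) - (yval z'.2 - 1 / 2) * w (p z'.1)| ≤ l1Cost p z z' := by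
  have hy : |yval z.2 - 1 / 2| = 1 / 2 := by cases z.2 <;> norm_num [yval]
  have hw' : |w (p z'.1)| ≤ 1 := abs_le.2 (hw.1 _ (hp z'.1))
  have hlip : |w (p z.1) - w (p z'.1)| ≤ |p z.1 - p z'.1| := hw.2 _ (hp z.1) _ (hp z'.1)
  calc |(yval z.2 - 1 / 2) * w (p z.1) - (yval z'.2 - 1 / 2) * w (p z'.1)|
      = |(yval z.2 - 1 / 2) * (w (p z.1) - w (p z'.1)) + (yval z.2 - yval z'.2) * w (p z'.1)| := by
        ring_nf
    _ ≤ 1 / 2 * |p z.1 - p z'.1| + |yval z.2 - yval z'.2| * 1 := by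
        refine (abs_add_le _ _).trans (add_le_add ?_ ?_) <;> rw [abs_mul]
        · rw [hy]; exact mul_le_mul_of_nonneg_left hlip (by norm_num)
        · exact mul_le_mul_of_nonneg_left hw' (abs_nonneg _)
    _ ≤ l1Cost p z z' := by unfold l1Cost; linarith [abs_nonneg (p z.1 - p z'.1)]

def mcShane (p : X → ℝ) (f : X × Bool → ℝ) (v : ℝ) (y : Bool) : ℝ :=
  ⨆ z, f z - (|v - p z.1| + |yval y - yval z.2|)

lemma mcShane_le {p : X → ℝ} {f g : X × Bool → ℝ} (hfg : ∀ z z', f z' - g z ≤ l1Cost p z z')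
    (z : X × Bool) : mcShane p f (p z.1) z.2 ≤ g z :=
  have : Nonempty (X × Bool) := ⟨z⟩
  ciSup_le fun z' => by unfold l1Cost at hfg; linarith [hfg z z']

variable [Fintype X]

lemma sum_mul_sub_sum_bernD_mul (D : X × Bool → ℝ) (p : X → ℝ) (g : ℝ → Bool → ℝ) :
    ∑ z, D z * g (p z.1) z.2 - ∑ z, bernD D p z * g (p z.1) z.2
      = expval D (fun z => (g (p z.1) true - g (p z.1) false) * (yval z.2 - p z.1)) := by
  simp only [expval, bernD, massx, yval, ← sum_sub_distrib, Fintype.sum_prod_type,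
    Fintype.sum_bool]
  refine sum_congr rfl fun x _ => ?_
  simp only [if_true, Bool.false_eq_true, if_false]
  ring

lemma abs_expval_le_one {D : X × Bool → ℝ} (hD : IsDistribution D) {p : X → ℝ}
    (hp : IsPredictor p) {w : ℝ → ℝ} (hw : IsSmoothWeight w) :
    |expval D (fun z => w (p z.1) * (yval z.2 - p z.1))| ≤ 1 := by
  have hterm (z : X × Bool) : |w (p z.1) * (yval z.2 - p z.1)| ≤ 1 := by
    obtain ⟨hp0, hp1⟩ := hp z.1
    have hy : |yval z.2 - p z.1| ≤ 1 := by
      rw [abs_le]; cases z.2 <;> simp only [yval] <;> constructor <;> norm_num <;> linarith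
    rw [abs_mul]
    exact mul_le_one₀ (abs_le.2 (hw.1 _ (hp z.1))) (abs_nonneg _) hy
  calc |expval D (fun z => w (p z.1) * (yval z.2 - p z.1))|
      ≤ ∑ z, D z * |w (p z.1) * (yval z.2 - p z.1)| := by
        refine (abs_sum_le_sum_abs _ _).trans_eq (sum_congr rfl fun z _ => ?_)
        rw [abs_mul, abs_of_nonneg (hD.1 z)]
    _ ≤ ∑ z, D z * 1 := sum_le_sum fun z _ => mul_le_mul_of_nonneg_left (hterm z) (hD.1 z)
    _ = 1 := by simp only [mul_one, hD.2]

lemma abs_expval_le_smCE {D : X × Bool → ℝ} (hD : IsDistribution D) {p : X → ℝ}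
    (hp : IsPredictor p) {w : ℝ → ℝ} (hw : IsSmoothWeight w) :
    |expval D (fun z => w (p z.1) * (yval z.2 - p z.1))| ≤ smCE D p := by
  refine le_csSup ⟨1, ?_⟩ ⟨w, hw.1, hw.2, rfl⟩
  rintro e ⟨w', hw'₁, hw'₂, rfl⟩
  exact abs_expval_le_one hD hp ⟨hw'₁, hw'₂⟩

lemma smCE_le {D : X × Bool → ℝ} {p : X → ℝ} {B : ℝ}
    (h : ∀ w, IsSmoothWeight w → |expval D (fun z => w (p z.1) * (yval z.2 - p z.1))| ≤ B) :
    smCE D p ≤ B := by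
  refine csSup_le ⟨_, fun _ => 0, fun v _ => by norm_num, fun v _ v' _ => by simp, rfl⟩ ?_
  rintro e ⟨w, hw₁, hw₂, rfl⟩
  exact h w ⟨hw₁, hw₂⟩

lemma EMD_le {D : X × Bool → ℝ} {p : X → ℝ} {γ : (X × Bool) × (X × Bool) → ℝ}
    (hγ : IsCoupling D (bernD D p) γ) : EMD D p ≤ ∑ e, γ e * l1Cost p e.1 e.2 := by
  refine csInf_le ⟨0, ?_⟩ ⟨γ, hγ, rfl⟩
  rintro _ ⟨γ', hγ', rfl⟩
  exact sum_nonneg fun e _ => mul_nonneg (hγ'.1 e) (l1Cost_nonneg p e.1 e.2)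

lemma le_EMD {D : X × Bool → ℝ} {p : X → ℝ} {B : ℝ}
    (hne : ∃ γ, IsCoupling D (bernD D p) γ)
    (h : ∀ γ, IsCoupling D (bernD D p) γ → B ≤ ∑ e, γ e * l1Cost p e.1 e.2) : B ≤ EMD D p := by
  obtain ⟨γ, hγ⟩ := hne
  refine le_csInf ⟨_, γ, hγ, rfl⟩ ?_
  rintro _ ⟨γ', hγ', rfl⟩
  exact h γ' hγ'

lemma abs_expval_le_cost {D : X × Bool → ℝ} {p : X → ℝ} (hp : IsPredictor p) {w : ℝ → ℝ}
    (hw : IsSmoothWeight w) {γ : (X × Bool) × (X × Bool) → ℝ}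
    (hγ : IsCoupling D (bernD D p) γ) :
    |expval D (fun z => w (p z.1) * (yval z.2 - p z.1))| ≤ ∑ e, γ e * l1Cost p e.1 e.2 := by
  set g : X × Bool → ℝ := fun z => (yval z.2 - 1 / 2) * w (p z.1)
  have hexp : expval D (fun z => w (p z.1) * (yval z.2 - p z.1))
      = ∑ e, γ e * (g e.1 - g e.2) := by
    rw [sum_mul_sub_eq_of_marginals hγ.2.1 hγ.2.2,
      sum_mul_sub_sum_bernD_mul D p fun v y => (yval y - 1 / 2) * w v]
    congr 1; funext z; simp only [yval, if_true, Bool.false_eq_true, if_false]; ring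
  rw [hexp]
  refine (abs_sum_le_sum_abs _ _).trans (sum_le_sum fun e _ => ?_)
  rw [abs_mul, abs_of_nonneg (hγ.1 e)]
  exact mul_le_mul_of_nonneg_left (abs_sub_le_l1Cost hp hw e.1 e.2) (hγ.1 e)

lemma le_mcShane (p : X → ℝ) (f : X × Bool → ℝ) (z : X × Bool) :
    f z ≤ mcShane p f (p z.1) z.2 := by
  refine le_of_eq_of_le ?_ (le_ciSup (Finite.bddAbove_range _) z)
  simp

lemma mcShane_le_add [Nonempty X] (p : X → ℝ) (f : X × Bool → ℝ) (v v' : ℝ) (y y' : Bool) :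
    mcShane p f v y ≤ mcShane p f v' y' + (|v - v'| + |yval y - yval y'|) :=
  ciSup_le fun z => by
    have hv := abs_sub_le v' v (p z.1)
    have hy := abs_sub_le (yval y') (yval y) (yval z.2)
    rw [abs_sub_comm v' v] at hv
    rw [abs_sub_comm (yval y') (yval y)] at hy
    refine le_trans ?_ (add_le_add_left (le_ciSup (Finite.bddAbove_range
      fun z => f z - (|v' - p z.1| + |yval y' - yval z.2|)) z) _)
    linarith

lemma bernD_nonneg {D : X × Bool → ℝ} (hD : IsDistribution D) {p : X → ℝ} (hp : IsPredictor p)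
    (z : X × Bool) : 0 ≤ bernD D p z := by
  obtain ⟨hp₀, hp₁⟩ := hp z.1
  refine mul_nonneg (add_nonneg (hD.1 _) (hD.1 _)) ?_
  split_ifs <;> linarith

lemma sum_bernD_mul_sub_sum_mul_le_two_smCE [Nonempty X] {D : X × Bool → ℝ}
    (hD : IsDistribution D) {p : X → ℝ} (hp : IsPredictor p) {f g : X × Bool → ℝ}
    (hfg : ∀ z z', f z' - g z ≤ l1Cost p z z') :
    ∑ z, bernD D p z * f z - ∑ z, D z * g z ≤ 2 * smCE D p := by
  set G := mcShane p f
  set w : ℝ → ℝ := fun v => (G v true - G v false) / 2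
  have hw : IsSmoothWeight w := isSmoothWeight_of_le_add (mcShane_le_add p f)
  have hE := abs_expval_le_smCE hD hp hw
  calc ∑ z, bernD D p z * f z - ∑ z, D z * g z
      ≤ ∑ z, bernD D p z * G (p z.1) z.2 - ∑ z, D z * G (p z.1) z.2 :=
        sub_le_sub
          (sum_le_sum fun z _ => mul_le_mul_of_nonneg_left (le_mcShane p f z) (bernD_nonneg hD hp z))
          (sum_le_sum fun z _ => mul_le_mul_of_nonneg_left (mcShane_le hfg z) (hD.1 z))
    _ = -(2 * expval D (fun z => w (p z.1) * (yval z.2 - p z.1))) := by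
        rw [← neg_sub, sum_mul_sub_sum_bernD_mul, expval, expval, mul_sum]
        congr 1
        exact sum_congr rfl fun z _ => by ring
    _ ≤ 2 * smCE D p := by linarith [neg_abs_le (expval D (fun z => w (p z.1) * (yval z.2 - p z.1)))]

end Calibration

/-- `EMD(J*, J^p)/2 ≤ smCE(p, D*) ≤ EMD(J*, J^p)`. -/
theorem smCE_vs_EMD
    {X : Type} [Fintype X] (D : X × Bool → ℝ) (hD : IsDistribution D)
    (p : X → ℝ) (hp : IsPredictor p) :
    EMD D p / 2 ≤ smCE D p ∧ smCE D p ≤ EMD D p := by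
  have : Nonempty X := by
    by_contra hX
    rw [not_nonempty_iff] at hX
    simpa using hD.2
  obtain ⟨γ, hγ, hcost⟩ := exists_coupling_cost_le (l1Cost_nonneg p) hD.1
    fun f g hfg => sum_bernD_mul_sub_sum_mul_le_two_smCE hD hp hfg
  refine ⟨by linarith [EMD_le hγ], le_EMD ⟨γ, hγ⟩ fun γ' hγ' => ?_⟩
  exact smCE_le fun w hw => abs_expval_le_cost hp hw hγ'
end
end

section
/- Let X be a finite set, D a probability distribution on X × {0,1} with random pair (x, y), and p : X → [0,1] a predictor. (Forward direction) If p is perfectly calibrated under D, then for every decision task T = (A, u) with a best-response function σ_T, E[u(σ_T(p(x)), y)] = max_{σ : [0,1] → A} E[u(σ(p(x)), y)]. (Converse) If this equality holds for every decision task T, then p is perfectly calibrated under D. -/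
open scoped Classical
open Finset Set

noncomputable section

/-- Perfect calibration: for every `v` in the image of `p`,
`E[y | p(x) = v] = v`, stated multiplicatively. -/
def PerfectlyCalibrated {X : Type} [Fintype X] (D : X × Bool → ℝ) (p : X → ℝ) : Prop :=
  ∀ v ∈ Set.range p,
    (∑ x : X, if p x = v then D (x, true) else 0) =
      v * (∑ x : X, if p x = v then massx D x else 0)

/-- `σT` is a best-response function for the decision task `(A, u)`: for every
`v ∈ [0,1]`, `σT v` maximizes `a ↦ E_{y ∼ Bernoulli(v)} u(a, y)`. -/
def IsBestResponse {A : Type} (u : A → Bool → ℝ) (σT : ℝ → A) : Prop :=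
  ∀ v ∈ Set.Icc (0 : ℝ) 1, ∀ a : A,
    v * u a true + (1 - v) * u a false ≤ v * u (σT v) true + (1 - v) * u (σT v) false

/-- The expected payoff `E[u(σ(p(x)), y)]`. -/
def payoff {X A : Type} [Fintype X] (D : X × Bool → ℝ) (p : X → ℝ)
    (u : A → Bool → ℝ) (σ : ℝ → A) : ℝ :=
  expval D (fun z => u (σ (p z.1)) z.2)

lemma payoff_group {X A : Type} [Fintype X] (D : X × Bool → ℝ) (p : X → ℝ)
    (u : A → Bool → ℝ) (σ : ℝ → A) :
    payoff D p u σ =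
      ∑ v ∈ Finset.image p Finset.univ,
        ((∑ x : X, if p x = v then D (x, true) else 0) * u (σ v) true
         + (∑ x : X, if p x = v then D (x, false) else 0) * u (σ v) false) := by
  unfold payoff expval
  rw [Fintype.sum_prod_type]
  simp only [Fintype.sum_bool]
  rw [← Finset.sum_fiberwise_of_maps_to (g := p) (t := Finset.image p Finset.univ)
      (fun x _ => Finset.mem_image_of_mem p (Finset.mem_univ x))]
  refine Finset.sum_congr rfl (fun v hv => ?_)
  rw [← Finset.sum_filter, ← Finset.sum_filter, Finset.sum_mul, Finset.sum_mul,
      ← Finset.sum_add_distrib]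
  refine Finset.sum_congr rfl (fun x hx => ?_)
  have : p x = v := (Finset.mem_filter.1 hx).2
  rw [this]

lemma mass_split {X : Type} [Fintype X] (D : X × Bool → ℝ) (p : X → ℝ) (v : ℝ) :
    (∑ x : X, if p x = v then massx D x else 0) =
      (∑ x : X, if p x = v then D (x, true) else 0)
      + (∑ x : X, if p x = v then D (x, false) else 0) := by
  rw [← Finset.sum_add_distrib]
  refine Finset.sum_congr rfl (fun x _ => ?_)
  unfold massx; split_ifs <;> ring


lemma quad_opt (S1 S0 v : ℝ) (h1 : 0 ≤ S1) (h0 : 0 ≤ S0)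
    (hk : ∀ t : ℝ, S1 * -((t-1)^2) + S0 * -(t^2) ≤ S1 * -((v-1)^2) + S0 * -(v^2)) :
    S1 = v * (S1 + S0) := by
  have hq : ∀ t : ℝ, (S1 + S0) * v ^ 2 - 2 * S1 * v ≤ (S1 + S0) * t ^ 2 - 2 * S1 * t := by
    intro t
    have := hk t
    nlinarith [this]
  have hmnn : (0:ℝ) ≤ S1 + S0 := by linarith
  rcases eq_or_lt_of_le hmnn with hm0 | hmpos
  · have hS10 : S1 = 0 := by linarith
    have hS00 : S0 = 0 := by linarith
    rw [hS10, hS00]; ring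
  · have hq1 := hq (S1 / (S1 + S0))
    have h2 : (S1 + S0) * (S1 / (S1 + S0)) = S1 := by field_simp
    have h1' := mul_le_mul_of_nonneg_left hq1 hmnn
    have h5 : (S1 + S0) * ((S1 + S0) * (S1 / (S1 + S0)) ^ 2) = S1 ^ 2 := by
      field_simp
    have h6 : (S1 + S0) * (2 * S1 * (S1 / (S1 + S0))) = 2 * S1 ^ 2 := by
      field_simp
    have h3 : ((S1 + S0) * v - S1) ^ 2 ≤ 0 := by nlinarith [h1', h5, h6]
    have h4 : (S1 + S0) * v - S1 = 0 := by nlinarith [sq_nonneg ((S1 + S0) * v - S1)]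
    linarith

/-- Calibrated predictions are trustworthy: `p` is perfectly calibrated
under `D` iff for every decision task `T = (A, u)` with best-response function `σT`,
`E[u(σT(p(x)), y)] = max_{σ : [0,1] → A} E[u(σ(p(x)), y)]`. -/
theorem calibrated_iff_best_response_optimal
    {X : Type} [Fintype X] (D : X × Bool → ℝ) (hD : IsDistribution D)
    (p : X → ℝ) (hp : IsPredictor p) :
    PerfectlyCalibrated D p ↔
      ∀ (A : Type) (u : A → Bool → ℝ) (σT : ℝ → A), IsBestResponse u σT →
        IsGreatest {e : ℝ | ∃ σ : ℝ → A, e = payoff D p u σ} (payoff D p u σT) := by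
  constructor
  · intro hcal A u σT hBR
    constructor
    · exact ⟨σT, rfl⟩
    · rintro e ⟨σ, rfl⟩
      rw [payoff_group, payoff_group]
      refine Finset.sum_le_sum (fun v hv => ?_)
      obtain ⟨x0, _, hx0⟩ := Finset.mem_image.1 hv
      have hv01 : v ∈ Set.Icc (0:ℝ) 1 := hx0 ▸ hp x0
      set S1 := (∑ x : X, if p x = v then D (x, true) else 0) with hS1def
      set S0 := (∑ x : X, if p x = v then D (x, false) else 0) with hS0def
      set M := (∑ x : X, if p x = v then massx D x else 0) with hMdef
      have hMnn : 0 ≤ M :=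
        Finset.sum_nonneg (fun x _ => by
          split_ifs
          · exact add_nonneg (hD.1 _) (hD.1 _)
          · exact le_refl 0)
      have hcv : S1 = v * M := hcal v ⟨x0, hx0⟩
      have hMsplit : M = S1 + S0 := mass_split D p v
      have hS0 : S0 = (1 - v) * M := by rw [hMsplit] at hcv ⊢; linarith
      calc S1 * u (σ v) true + S0 * u (σ v) false
          = M * (v * u (σ v) true + (1 - v) * u (σ v) false) := by
            rw [hcv, hS0]; ring
        _ ≤ M * (v * u (σT v) true + (1 - v) * u (σT v) false) :=
            mul_le_mul_of_nonneg_left (hBR v hv01 (σ v)) hMnn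
        _ = S1 * u (σT v) true + S0 * u (σT v) false := by
            rw [hcv, hS0]; ring
  · intro h
    rintro v ⟨x0, rfl⟩
    set v := p x0 with hv
    set u : ℝ → Bool → ℝ := fun a b => if b then -((a-1)^2) else -(a^2) with hu
    have hBR : IsBestResponse u id := by
      intro w hw a
      simp only [hu, id_eq]
      norm_num
      nlinarith [sq_nonneg (a - w)]
    obtain ⟨-, hub⟩ := h ℝ u id hBR
    have hvimg : v ∈ Finset.image p Finset.univ :=
      Finset.mem_image_of_mem p (Finset.mem_univ x0)
    have hkey : ∀ t : ℝ,
        (∑ x : X, if p x = v then D (x, true) else 0) * u t true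
          + (∑ x : X, if p x = v then D (x, false) else 0) * u t false ≤
        (∑ x : X, if p x = v then D (x, true) else 0) * u v true
          + (∑ x : X, if p x = v then D (x, false) else 0) * u v false := by
      intro t
      have hle : payoff D p u (fun w => if w = v then t else w) ≤ payoff D p u id :=
        hub ⟨_, rfl⟩
      rw [payoff_group, payoff_group, ← Finset.add_sum_erase _ _ hvimg,
          ← Finset.add_sum_erase _ _ hvimg] at hle
      have herase :
          (∑ w ∈ (Finset.image p Finset.univ).erase v,
            ((∑ x : X, if p x = w then D (x, true) else 0) *
              u ((fun w => if w = v then t else w) w) true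
             + (∑ x : X, if p x = w then D (x, false) else 0) *
              u ((fun w => if w = v then t else w) w) false)) =
          (∑ w ∈ (Finset.image p Finset.univ).erase v,
            ((∑ x : X, if p x = w then D (x, true) else 0) * u (id w) true
             + (∑ x : X, if p x = w then D (x, false) else 0) * u (id w) false)) := by
        refine Finset.sum_congr rfl (fun w hw => ?_)
        have hne : w ≠ v := Finset.ne_of_mem_erase hw
        simp [hne]
      rw [herase] at hle
      have hle2 := le_of_add_le_add_right hle
      simpa using hle2
    have hS1nn : (0:ℝ) ≤ ∑ x : X, if p x = v then D (x, true) else 0 :=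
      Finset.sum_nonneg (fun x _ => by split_ifs; exacts [hD.1 _, le_refl 0])
    have hS0nn : (0:ℝ) ≤ ∑ x : X, if p x = v then D (x, false) else 0 :=
      Finset.sum_nonneg (fun x _ => by split_ifs; exacts [hD.1 _, le_refl 0])
    rw [mass_split]
    refine quad_opt _ _ _ hS1nn hS0nn (fun t => ?_)
    have := hkey t
    simp only [hu] at this
    norm_num at this ⊢
    linarith
end
end

section
/- Let X be a finite set, D a probability distribution on X × {0,1} with random pair (x, y), and p : X → [0,1] a predictor. Then ECE(p, D)² ≤ ECE₂(p, D)² ≤ CDL(p, D) ≤ 2·ECE(p, D) ≤ 2·ECE₂(p, D). -/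
open scoped Classical
open Finset Set

noncomputable section

/-- `ECE₂(p, D) = (E[(E[y | p(x)] - p(x))²])^{1/2}`. -/
def ECE2 {X : Type} [Fintype X] (D : X × Bool → ℝ) (p : X → ℝ) : ℝ :=
  Real.sqrt (∑ x : X, massx D x * (phat D p x - p x) ^ 2)

/-- The Calibration Fixed Decision Loss
`CFDL_T(p, D) = max_σ E[u(σ(p(x)), y)] - E[u(σT(p(x)), y)]`. -/
def CFDL {X A : Type} [Fintype X] (D : X × Bool → ℝ) (p : X → ℝ)
    (u : A → Bool → ℝ) (σT : ℝ → A) : ℝ :=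
  sSup {e : ℝ | ∃ σ : ℝ → A, e = payoff D p u σ} - payoff D p u σT

/-- The Calibration Decision Loss: the supremum of `CFDL_T(p, D)` over all decision
tasks `T = (A, u)` with payoff bounded in `[0,1]` (and a best-response function `σT`). -/
def CDL {X : Type} [Fintype X] (D : X × Bool → ℝ) (p : X → ℝ) : ℝ :=
  sSup {c : ℝ | ∃ (A : Type) (u : A → Bool → ℝ) (σT : ℝ → A),
    (∀ a y, u a y ∈ Set.Icc (0 : ℝ) 1) ∧ IsBestResponse u σT ∧ c = CFDL D p u σT}

section Aux

variable {X : Type} [Fintype X] (D : X × Bool → ℝ) (p : X → ℝ)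

def Nval (v : ℝ) : ℝ := ∑ x' : X, if p x' = v then D (x', true) else 0

def Mval (v : ℝ) : ℝ := ∑ x' : X, if p x' = v then massx D x' else 0

lemma phat_eq (x : X) : phat D p x = Nval D p (p x) / Mval D p (p x) := rfl

lemma massx_nonneg (hD : IsDistribution D) (x : X) : 0 ≤ massx D x :=
  add_nonneg (hD.1 _) (hD.1 _)

lemma Nval_nonneg (hD : IsDistribution D) (v : ℝ) : 0 ≤ Nval D p v :=
  Finset.sum_nonneg fun x _ => by by_cases h : p x = v <;> simp [h, hD.1]

lemma Nval_le_Mval (hD : IsDistribution D) (v : ℝ) : Nval D p v ≤ Mval D p v :=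
  Finset.sum_le_sum fun x _ => by
    by_cases h : p x = v <;> simp [h, massx, le_add_of_nonneg_left (hD.1 (x, false))]

lemma Mval_nonneg (hD : IsDistribution D) (v : ℝ) : 0 ≤ Mval D p v :=
  le_trans (Nval_nonneg D p hD v) (Nval_le_Mval D p hD v)

lemma phat_mem (hD : IsDistribution D) (x : X) : phat D p x ∈ Set.Icc (0 : ℝ) 1 := by
  rw [phat_eq]
  rcases eq_or_ne (Mval D p (p x)) 0 with h | h
  · simp [h]
  · have hMpos : 0 < Mval D p (p x) := lt_of_le_of_ne (Mval_nonneg D p hD _) (Ne.symm h)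
    exact ⟨div_nonneg (Nval_nonneg D p hD _) hMpos.le,
      (div_le_one hMpos).2 (Nval_le_Mval D p hD _)⟩

lemma sum_massx (hD : IsDistribution D) : ∑ x : X, massx D x = 1 := by
  have h := hD.2
  rw [Fintype.sum_prod_type] at h
  simpa [Fintype.sum_bool, massx, add_comm] using h

lemma ECE_nonneg (hD : IsDistribution D) : 0 ≤ ECE D p :=
  Finset.sum_nonneg fun x _ => mul_nonneg (massx_nonneg D hD x) (abs_nonneg _)

lemma sum_phat (hD : IsDistribution D) (g : ℝ → ℝ) :
    ∑ x : X, massx D x * phat D p x * g (p x) = ∑ x : X, D (x, true) * g (p x) := by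
  rw [← Finset.sum_fiberwise_of_maps_to (t := Finset.univ.image p)
      (fun x _ => Finset.mem_image_of_mem p (Finset.mem_univ x))
      (fun x => massx D x * phat D p x * g (p x)),
    ← Finset.sum_fiberwise_of_maps_to (t := Finset.univ.image p)
      (fun x _ => Finset.mem_image_of_mem p (Finset.mem_univ x))
      (fun x => D (x, true) * g (p x))]
  refine Finset.sum_congr rfl fun v _ => ?_
  have hM : ∑ x ∈ Finset.univ.filter (fun x => p x = v), massx D x = Mval D p v :=
    Finset.sum_filter _ _
  have hN : ∑ x ∈ Finset.univ.filter (fun x => p x = v), D (x, true) = Nval D p v :=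
    Finset.sum_filter _ _
  calc ∑ x ∈ Finset.univ.filter (fun x => p x = v), massx D x * phat D p x * g (p x)
      = ∑ x ∈ Finset.univ.filter (fun x => p x = v),
          massx D x * (Nval D p v / Mval D p v * g v) := by
        refine Finset.sum_congr rfl fun x hx => ?_
        have hv : p x = v := (Finset.mem_filter.1 hx).2
        rw [phat_eq, hv]; ring
    _ = Mval D p v * (Nval D p v / Mval D p v * g v) := by
        rw [← Finset.sum_mul, hM]
    _ = Nval D p v * g v := by
        rcases eq_or_ne (Mval D p v) 0 with h | h
        · have hN0 : Nval D p v = 0 :=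
            le_antisymm (h ▸ Nval_le_Mval D p hD v) (Nval_nonneg D p hD v)
          rw [h, hN0]; ring
        · field_simp
    _ = ∑ x ∈ Finset.univ.filter (fun x => p x = v), D (x, true) * g (p x) := by
        rw [← hN, Finset.sum_mul]
        refine Finset.sum_congr rfl fun x hx => ?_
        rw [(Finset.mem_filter.1 hx).2]

lemma payoff_eq {A : Type} (hD : IsDistribution D) (u : A → Bool → ℝ) (σ : ℝ → A) :
    payoff D p u σ = ∑ x : X, massx D x *
      (phat D p x * u (σ (p x)) true + (1 - phat D p x) * u (σ (p x)) false) := by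
  have hA1 := sum_phat D p hD (fun v => u (σ v) true)
  have hA2 := sum_phat D p hD (fun v => u (σ v) false)
  unfold payoff expval
  rw [Fintype.sum_prod_type]
  simp only [Fintype.sum_bool]
  have expand : ∀ x : X, massx D x *
      (phat D p x * u (σ (p x)) true + (1 - phat D p x) * u (σ (p x)) false)
      = massx D x * phat D p x * u (σ (p x)) true + (massx D x * u (σ (p x)) false
        - massx D x * phat D p x * u (σ (p x)) false) := fun x => by ring
  have hsplit1 : ∑ x : X, (D (x, true) * u (σ (p x)) true + D (x, false) * u (σ (p x)) false)
      = (∑ x : X, D (x, true) * u (σ (p x)) true)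
        + ∑ x : X, D (x, false) * u (σ (p x)) false := Finset.sum_add_distrib
  have hsplit2 : ∑ x : X, massx D x *
      (phat D p x * u (σ (p x)) true + (1 - phat D p x) * u (σ (p x)) false)
      = (∑ x : X, massx D x * phat D p x * u (σ (p x)) true)
        + ((∑ x : X, massx D x * u (σ (p x)) false)
          - ∑ x : X, massx D x * phat D p x * u (σ (p x)) false) := by
    simp_rw [expand]
    rw [Finset.sum_add_distrib, Finset.sum_sub_distrib]
  have hmm : ∑ x : X, massx D x * u (σ (p x)) false
      = (∑ x : X, D (x, true) * u (σ (p x)) false)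
        + ∑ x : X, D (x, false) * u (σ (p x)) false := by
    rw [← Finset.sum_add_distrib]
    refine Finset.sum_congr rfl fun x _ => ?_
    unfold massx; ring
  linarith [hsplit1, hsplit2, hmm, hA1, hA2]

lemma payoff_le {A : Type} (hD : IsDistribution D) (hp : IsPredictor p)
    (u : A → Bool → ℝ) (σT : ℝ → A) (hu : ∀ a y, u a y ∈ Set.Icc (0 : ℝ) 1)
    (hbr : IsBestResponse u σT) (σ : ℝ → A) :
    payoff D p u σ ≤ payoff D p u σT + 2 * ECE D p := by
  rw [payoff_eq D p hD u σ, payoff_eq D p hD u σT, ECE, Finset.mul_sum,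
    ← Finset.sum_add_distrib]
  refine Finset.sum_le_sum fun x _ => ?_
  have hm := massx_nonneg D hD x
  set a := σ (p x) with ha
  set b := σT (p x) with hb
  set q := phat D p x with hq
  have h1 := hbr (p x) (hp x) a
  have hut := hu a true; have huf := hu a false
  have hbt := hu b true; have hbf := hu b false
  have habs1 : |u a true - u a false| ≤ 1 :=
    abs_le.2 ⟨by linarith [hut.1, huf.2], by linarith [hut.2, huf.1]⟩
  have habs2 : |u b true - u b false| ≤ 1 :=
    abs_le.2 ⟨by linarith [hbt.1, hbf.2], by linarith [hbt.2, hbf.1]⟩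
  have hd1 : (q - p x) * (u a true - u a false) ≤ |q - p x| := by
    calc (q - p x) * (u a true - u a false) ≤ |(q - p x) * (u a true - u a false)| :=
          le_abs_self _
      _ = |q - p x| * |u a true - u a false| := abs_mul _ _
      _ ≤ |q - p x| * 1 := mul_le_mul_of_nonneg_left habs1 (abs_nonneg _)
      _ = |q - p x| := mul_one _
  have hd2 : -|q - p x| ≤ (q - p x) * (u b true - u b false) := by
    have h5 : |(q - p x) * (u b true - u b false)| ≤ |q - p x| := by
      rw [abs_mul]
      calc |q - p x| * |u b true - u b false| ≤ |q - p x| * 1 :=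
            mul_le_mul_of_nonneg_left habs2 (abs_nonneg _)
        _ = |q - p x| := mul_one _
    have h6 := neg_abs_le ((q - p x) * (u b true - u b false))
    linarith
  have e1 : q * u a true + (1 - q) * u a false
      = p x * u a true + (1 - p x) * u a false + (q - p x) * (u a true - u a false) := by ring
  have e2 : q * u b true + (1 - q) * u b false
      = p x * u b true + (1 - p x) * u b false + (q - p x) * (u b true - u b false) := by ring
  have key : q * u a true + (1 - q) * u a false
      ≤ q * u b true + (1 - q) * u b false + 2 * |q - p x| := by linarith
  refine le_trans (mul_le_mul_of_nonneg_left key hm) (le_of_eq ?_)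
  ring

lemma cfdl_le {A : Type} (hD : IsDistribution D) (hp : IsPredictor p)
    (u : A → Bool → ℝ) (σT : ℝ → A) (hu : ∀ a y, u a y ∈ Set.Icc (0 : ℝ) 1)
    (hbr : IsBestResponse u σT) : CFDL D p u σT ≤ 2 * ECE D p := by
  have h : sSup {e : ℝ | ∃ σ : ℝ → A, e = payoff D p u σ} ≤ payoff D p u σT + 2 * ECE D p := by
    refine csSup_le ⟨payoff D p u σT, σT, rfl⟩ ?_
    rintro e ⟨σ, rfl⟩
    exact payoff_le D p hD hp u σT hu hbr σ
  unfold CFDL; linarith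

/-- clamp to [0,1] -/
def clamp01 (t : ℝ) : ℝ := max 0 (min 1 t)

lemma clamp01_mem (t : ℝ) : clamp01 t ∈ Set.Icc (0 : ℝ) 1 :=
  ⟨le_max_left _ _, max_le zero_le_one (min_le_left _ _)⟩

lemma clamp01_eq {t : ℝ} (h : t ∈ Set.Icc (0 : ℝ) 1) : clamp01 t = t := by
  unfold clamp01
  rw [min_eq_right h.2, max_eq_right h.1]

end Aux

/-- `ECE(p,D)² ≤ ECE₂(p,D)² ≤ CDL(p,D) ≤ 2·ECE(p,D) ≤ 2·ECE₂(p,D)`. -/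
theorem ece_cdl_relation
    {X : Type} [Fintype X] (D : X × Bool → ℝ) (hD : IsDistribution D)
    (p : X → ℝ) (hp : IsPredictor p) :
    ECE D p ^ 2 ≤ ECE2 D p ^ 2 ∧ ECE2 D p ^ 2 ≤ CDL D p ∧
      CDL D p ≤ 2 * ECE D p ∧ 2 * ECE D p ≤ 2 * ECE2 D p := by
  classical
  have hS : ECE2 D p ^ 2 = ∑ x : X, massx D x * (phat D p x - p x) ^ 2 := by
    unfold ECE2
    exact Real.sq_sqrt (Finset.sum_nonneg fun x _ =>
      mul_nonneg (massx_nonneg D hD x) (sq_nonneg _))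
  -- (1) ECE^2 ≤ ECE2^2
  have h1 : ECE D p ^ 2 ≤ ECE2 D p ^ 2 := by
    rw [hS]
    have cs := Finset.sum_mul_sq_le_sq_mul_sq Finset.univ
      (fun x : X => Real.sqrt (massx D x))
      (fun x : X => Real.sqrt (massx D x) * |phat D p x - p x|)
    have e1 : ∀ x : X, Real.sqrt (massx D x) * (Real.sqrt (massx D x) * |phat D p x - p x|)
        = massx D x * |phat D p x - p x| := fun x => by
      rw [← mul_assoc, Real.mul_self_sqrt (massx_nonneg D hD x)]
    have e2 : ∀ x : X, Real.sqrt (massx D x) ^ 2 = massx D x := fun x =>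
      Real.sq_sqrt (massx_nonneg D hD x)
    have e3 : ∀ x : X, (Real.sqrt (massx D x) * |phat D p x - p x|) ^ 2
        = massx D x * (phat D p x - p x) ^ 2 := fun x => by
      rw [mul_pow, Real.sq_sqrt (massx_nonneg D hD x), sq_abs]
    simp_rw [e1, e2, e3, sum_massx D hD, one_mul] at cs
    exact cs
  -- (4) ECE ≤ ECE2
  have h4 : ECE D p ≤ ECE2 D p := by
    have h1' : ECE D p ^ 2 ≤ ∑ x : X, massx D x * (phat D p x - p x) ^ 2 := hS ▸ h1
    have hsq := Real.sqrt_le_sqrt h1'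
    rw [Real.sqrt_sq (ECE_nonneg D p hD)] at hsq
    unfold ECE2
    exact hsq
  -- trivial decision task
  have hu0 : ∀ (a : PUnit) (y : Bool), (fun (_ : PUnit) (_ : Bool) => (0:ℝ)) a y ∈
      Set.Icc (0:ℝ) 1 := fun a y => ⟨le_refl 0, zero_le_one⟩
  have hbr0 : IsBestResponse (fun (_ : PUnit) (_ : Bool) => (0:ℝ)) (fun _ => PUnit.unit) := by
    intro v hv a; simp
  -- (3) CDL ≤ 2 ECE
  have h3 : CDL D p ≤ 2 * ECE D p := by
    refine csSup_le ⟨_, PUnit, (fun _ _ => 0), (fun _ => PUnit.unit), hu0, hbr0, rfl⟩ ?_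
    rintro c ⟨A, u, σT, hu, hbr, rfl⟩
    exact cfdl_le D p hD hp u σT hu hbr
  -- (2) ECE2^2 ≤ CDL via quadratic scoring task
  have h2 : ECE2 D p ^ 2 ≤ CDL D p := by
    set A := {a : ℝ // a ∈ Set.Icc (0:ℝ) 1} with hA
    set uq : A → Bool → ℝ := fun a y => 1 - ((a : ℝ) - (if y then 1 else 0)) ^ 2 with huqdef
    set σTq : ℝ → A := fun v => ⟨clamp01 v, clamp01_mem v⟩ with hσT
    set σs : ℝ → A := fun v => ⟨clamp01 (Nval D p v / Mval D p v),
      clamp01_mem _⟩ with hσs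
    have uq_true : ∀ a : A, uq a true = 1 - ((a : ℝ) - 1) ^ 2 := fun a => by
      simp [huqdef]
    have uq_false : ∀ a : A, uq a false = 1 - ((a : ℝ)) ^ 2 := fun a => by
      simp [huqdef]
    have huq : ∀ a y, uq a y ∈ Set.Icc (0:ℝ) 1 := by
      intro a y
      obtain ⟨ha0, ha1⟩ := Set.mem_Icc.mp a.2
      rw [Set.mem_Icc]
      cases y
      · rw [uq_false]; constructor <;> nlinarith
      · rw [uq_true]; constructor <;> nlinarith
    have hbrq : IsBestResponse uq σTq := by
      intro v hv a
      obtain ⟨ha0, ha1⟩ := Set.mem_Icc.mp a.2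
      have hcl : ((σTq v : ℝ)) = v := clamp01_eq hv
      simp only [uq_true, uq_false, hcl]
      nlinarith [sq_nonneg ((a : ℝ) - v), hv.1, hv.2]
    have hcoe1 : ∀ x : X, ((σs (p x) : ℝ)) = phat D p x := fun x => by
      show clamp01 (Nval D p (p x) / Mval D p (p x)) = phat D p x
      rw [phat_eq D p x]
      exact clamp01_eq (phat_eq D p x ▸ phat_mem D p hD x)
    have hcoe2 : ∀ x : X, ((σTq (p x) : ℝ)) = p x := fun x =>
      clamp01_eq (hp x)
    have hpay : payoff D p uq σs - payoff D p uq σTq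
        = ∑ x : X, massx D x * (phat D p x - p x) ^ 2 := by
      rw [payoff_eq D p hD uq σs, payoff_eq D p hD uq σTq, ← Finset.sum_sub_distrib]
      refine Finset.sum_congr rfl fun x _ => ?_
      rw [uq_true, uq_false, uq_true, uq_false, hcoe1 x, hcoe2 x]
      ring
    have hbdd : BddAbove {e : ℝ | ∃ σ : ℝ → A, e = payoff D p uq σ} := by
      refine ⟨payoff D p uq σTq + 2 * ECE D p, ?_⟩
      rintro e ⟨σ, rfl⟩
      exact payoff_le D p hD hp uq σTq huq hbrq σ
    have hmem : payoff D p uq σs ∈ {e : ℝ | ∃ σ : ℝ → A, e = payoff D p uq σ} := ⟨σs, rfl⟩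
    have hle : payoff D p uq σs ≤ sSup {e : ℝ | ∃ σ : ℝ → A, e = payoff D p uq σ} :=
      le_csSup hbdd hmem
    have hcfdl : ECE2 D p ^ 2 ≤ CFDL D p uq σTq := by
      rw [hS, ← hpay]
      unfold CFDL
      linarith
    have hbddC : BddAbove {c : ℝ | ∃ (A : Type) (u : A → Bool → ℝ) (σT : ℝ → A),
        (∀ a y, u a y ∈ Set.Icc (0 : ℝ) 1) ∧ IsBestResponse u σT ∧ c = CFDL D p u σT} := by
      refine ⟨2 * ECE D p, ?_⟩
      rintro c ⟨A', u, σT, hu, hbr, rfl⟩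
      exact cfdl_le D p hD hp u σT hu hbr
    have hmemC : CFDL D p uq σTq ∈ {c : ℝ | ∃ (A : Type) (u : A → Bool → ℝ) (σT : ℝ → A),
        (∀ a y, u a y ∈ Set.Icc (0 : ℝ) 1) ∧ IsBestResponse u σT ∧ c = CFDL D p u σT} :=
      ⟨A, uq, σTq, huq, hbrq, rfl⟩
    exact le_trans hcfdl (le_csSup hbddC hmemC)
  exact ⟨h1, h2, h3, by linarith⟩
end
end

section
/- Fix ε ∈ (0, 1/10). Let X be a one-point set, and let D1 be the distribution on X × {0,1} under which y is Bernoulli with parameter 1/2 + ε (independent of x). Let p1 be the constant predictor p1(x) = 1/2. Then ECE₂(p1, D1) = ε and CDL(p1, D1) = 2ε. In particular, the inequality CDL ≤ 2·ECE₂ is tight. -/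
open scoped Classical
open Finset Set

noncomputable section

section Aux

variable (ε : ℝ)

lemma payoff_eq_s7 {A : Type} (u : A → Bool → ℝ) (σ : ℝ → A) :
    payoff (fun z : PUnit × Bool => if z.2 then 1 / 2 + ε else 1 / 2 - ε)
      (fun _ : PUnit => 1 / 2) u σ
    = (1/2 - ε) * u (σ (1/2)) false + (1/2 + ε) * u (σ (1/2)) true := by
  simp [payoff, expval, Fintype.sum_prod_type]; ring

lemma cfdl_le_s7 (hε : ε ∈ Set.Ioo (0 : ℝ) (1 / 10)) {A : Type} (u : A → Bool → ℝ)
    (σT : ℝ → A) (hu : ∀ a y, u a y ∈ Set.Icc (0 : ℝ) 1) (hbr : IsBestResponse u σT) :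
    CFDL (fun z : PUnit × Bool => if z.2 then 1 / 2 + ε else 1 / 2 - ε)
      (fun _ : PUnit => 1 / 2) u σT ≤ 2 * ε := by
  obtain ⟨hε0, hε1⟩ := hε
  have key : ∀ σ : ℝ → A,
      payoff (fun z : PUnit × Bool => if z.2 then 1 / 2 + ε else 1 / 2 - ε)
        (fun _ : PUnit => 1 / 2) u σ ≤
      payoff (fun z : PUnit × Bool => if z.2 then 1 / 2 + ε else 1 / 2 - ε)
        (fun _ : PUnit => 1 / 2) u σT + 2 * ε := by
    intro σ
    rw [payoff_eq_s7, payoff_eq_s7]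
    have hbr2 := hbr (1/2) (by norm_num) (σ (1/2))
    have h1 := (hu (σ (1/2)) true).2
    have h2 := (hu (σT (1/2)) true).1
    nlinarith [hbr2, h1, h2]
  have hne : {e : ℝ | ∃ σ : ℝ → A,
      e = payoff (fun z : PUnit × Bool => if z.2 then 1 / 2 + ε else 1 / 2 - ε)
        (fun _ : PUnit => 1 / 2) u σ}.Nonempty := ⟨_, σT, rfl⟩
  have := csSup_le hne (fun e ⟨σ, hσ⟩ => hσ ▸ key σ)
  unfold CFDL
  linarith

lemma cfdl_example (hε : ε ∈ Set.Ioo (0 : ℝ) (1 / 10)) :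
    CFDL (fun z : PUnit × Bool => if z.2 then 1 / 2 + ε else 1 / 2 - ε)
      (fun _ : PUnit => 1 / 2)
      (fun (a : Bool) (y : Bool) => if a = y then (1 : ℝ) else 0)
      (fun v => if 1/2 < v then true else false) = 2 * ε := by
  obtain ⟨hε0, hε1⟩ := hε
  set u : Bool → Bool → ℝ := fun a y => if a = y then (1 : ℝ) else 0 with hu
  set σT : ℝ → Bool := fun v => if 1/2 < v then true else false with hσT
  have hσT12 : σT (1/2) = false := by simp [hσT]
  have hpT : payoff (fun z : PUnit × Bool => if z.2 then 1 / 2 + ε else 1 / 2 - ε)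
      (fun _ : PUnit => 1 / 2) u σT = 1/2 - ε := by
    rw [payoff_eq_s7, hσT12]; simp [hu]
  have hS : {e : ℝ | ∃ σ : ℝ → Bool,
      e = payoff (fun z : PUnit × Bool => if z.2 then 1 / 2 + ε else 1 / 2 - ε)
        (fun _ : PUnit => 1 / 2) u σ} = {1/2 - ε, 1/2 + ε} := by
    ext e
    constructor
    · rintro ⟨σ, rfl⟩
      rw [payoff_eq_s7]
      cases h : σ (1/2)
      · simp only [Set.mem_insert_iff, Set.mem_singleton_iff]
        left; simp [hu, h]; try ring
      · simp only [Set.mem_insert_iff, Set.mem_singleton_iff]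
        right; simp [hu, h]; try ring
    · rintro (rfl | rfl)
      · exact ⟨fun _ => false, by rw [payoff_eq_s7]; simp [hu]; try ring⟩
      · exact ⟨fun _ => true, by rw [payoff_eq_s7]; simp [hu]; try ring⟩
  unfold CFDL
  rw [hS, hpT]
  have : sSup ({1/2 - ε, 1/2 + ε} : Set ℝ) = 1/2 + ε := by
    rw [csSup_pair]; exact max_eq_right (by linarith)
  rw [this]; ring

end Aux

/-- for `ε ∈ (0, 1/10)`, the one-point example where `y` is
Bernoulli(`1/2 + ε`) and the predictor is constantly `1/2` has `ECE₂ = ε` and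
`CDL = 2ε`; in particular the inequality `CDL ≤ 2·ECE₂` is tight. -/


theorem cdl_tight_example_one
    (ε : ℝ) (hε : ε ∈ Set.Ioo (0 : ℝ) (1 / 10)) :
    ECE2 (fun z : PUnit × Bool => if z.2 then 1 / 2 + ε else 1 / 2 - ε)
        (fun _ : PUnit => 1 / 2) = ε ∧
      CDL (fun z : PUnit × Bool => if z.2 then 1 / 2 + ε else 1 / 2 - ε)
        (fun _ : PUnit => 1 / 2) = 2 * ε := by
  obtain ⟨hε0, hε1⟩ := hε
  constructor
  · have hphat : phat (fun z : PUnit × Bool => if z.2 then 1 / 2 + ε else 1 / 2 - ε)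
        (fun _ : PUnit => 1 / 2) PUnit.unit = 1/2 + ε := by
      simp [phat, massx]
      ring_nf
    unfold ECE2
    rw [Finset.sum_eq_single PUnit.unit (by simp) (by simp)]
    rw [hphat]
    have : massx (fun z : PUnit × Bool => if z.2 then 1 / 2 + ε else 1 / 2 - ε)
        PUnit.unit = 1 := by simp [massx]; ring
    rw [this]
    rw [show (1:ℝ) * (1/2 + ε - 1/2)^2 = ε^2 by ring]
    exact Real.sqrt_sq hε0.le
  · apply le_antisymm
    · apply Real.sSup_le
      · rintro c ⟨A, u, σT, hu, hbr, rfl⟩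
        exact cfdl_le_s7 ε ⟨hε0, hε1⟩ u σT hu hbr
      · linarith
    · apply le_csSup
      · refine ⟨2 * ε, ?_⟩
        rintro c ⟨A, u, σT, hu, hbr, rfl⟩
        exact cfdl_le_s7 ε ⟨hε0, hε1⟩ u σT hu hbr
      · refine ⟨Bool, fun a y => if a = y then (1 : ℝ) else 0,
          fun v => if 1/2 < v then true else false, ?_, ?_, ?_⟩
        · intro a y; by_cases h : a = y <;> simp [h]
        · intro v hv a
          obtain ⟨hv0, hv1⟩ := hv
          cases a <;> dsimp only <;> split_ifs <;>
            first
              | exact absurd rfl (by assumption)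
              | exact False.elim (by assumption)
              | linarith
        · exact (cfdl_example ε ⟨hε0, hε1⟩).symm
end
end

section
/- Fix ε ∈ (0, 1/10). Let X = [ε, 1], let D2 be the distribution on X × {0,1} under which x is uniform on [ε, 1] and, conditioned on x, the label y is Bernoulli with parameter x − ε, and let p2 be the identity predictor p2(x) = x. Then ECE(p2, D2) = ε and CDL(p2, D2) ≤ ε²/(1 − ε). In particular, CDL can be quadratically smaller than ECE. -/
/-!
Since `E[y | x] = x - ε`, the calibration error is exactly `ε` at every prediction.

For a task with best response `σT`, the value `V v = E_{y ∼ Bern v} u(σT v, y)` is convex on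
`[0, 1]` with subgradient `s v = u(σT v, 1) - u(σT v, 0) ∈ [-1, 1]`. At prediction `v` the true
belief is `v - ε`, so averaged over `v ∈ [ε, 1]` no strategy earns more than `V (v - ε)`, while
`σT` earns `V v - ε s v`. After the shift `v ↦ v - ε` the difference of the two averages is
`(1 - ε)⁻¹ (∫₀^ε V - ∫_{1-ε}^1 V + ε ∫_ε^1 s)`. A subgradient integrates to at most the increment,
`∫_ε^1 s ≤ V 1 - V ε`, and `V` is 1-Lipschitz, so each end interval differs from `ε` times the
value at its right end by at most `ε² / 2`; altogether the regret is at most `ε² / (1 - ε)`.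
-/


open scoped Classical
open MeasureTheory Set

noncomputable section

/-- The Bernoulli distribution with parameter `r` on `Bool`, as a measure. -/
def bern (r : ℝ) : Measure Bool :=
  ENNReal.ofReal r • Measure.dirac true + ENNReal.ofReal (1 - r) • Measure.dirac false

/-- The joint distribution `D2` of `(x, y)` (equivalently of `(p2(x), y)` since `p2 = id`):
`x` is uniform on `[ε, 1]` and, conditioned on `x`, the label `y` is Bernoulli(`x - ε`). -/
def D2 (ε : ℝ) : Measure (ℝ × Bool) :=
  ((ENNReal.ofReal (1 - ε))⁻¹ • volume.restrict (Set.Icc ε 1)).bind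
    fun v => (bern (v - ε)).map fun y => (v, y)

/-- The σ-algebra on `ℝ × Bool` generated by the prediction (first coordinate). -/
def predσ : MeasurableSpace (ℝ × Bool) := MeasurableSpace.comap Prod.fst inferInstance

/-- Numerical value of the label, as a function on the joint space. -/
def Yf : ℝ × Bool → ℝ := fun z => if z.2 then 1 else 0

/-- `ECE(p, D) = E|E[y | p(x)] - p(x)|`, computed on the joint distribution of
`(p(x), y)` via conditional expectation given the prediction. -/
def ECEm (μ : Measure (ℝ × Bool)) : ℝ :=
  ∫ z, |(μ[Yf|predσ]) z - z.1| ∂μ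

/-- The expected payoff `E[u(σ(p(x)), y)]` under the joint distribution `μ` of
`(p(x), y)`. -/
def payoffm {A : Type} (μ : Measure (ℝ × Bool)) (u : A → Bool → ℝ) (σ : ℝ → A) : ℝ :=
  ∫ z, u (σ z.1) z.2 ∂μ

/-- The map `v ↦ u(σ(v), ·)` is measurable (so that its expected payoff makes sense). -/
def MeasurableStrategy {A : Type} (u : A → Bool → ℝ) (σ : ℝ → A) : Prop :=
  ∀ y : Bool, Measurable fun v => u (σ v) y

/-- `CFDL_T(p, D) = max_σ E[u(σ(p(x)), y)] - E[u(σT(p(x)), y)]`. -/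
def CFDLm {A : Type} (μ : Measure (ℝ × Bool)) (u : A → Bool → ℝ) (σT : ℝ → A) : ℝ :=
  sSup {e : ℝ | ∃ σ : ℝ → A, MeasurableStrategy u σ ∧ e = payoffm μ u σ} -
    payoffm μ u σT

/-- The Calibration Decision Loss: the supremum of `CFDL_T` over all decision tasks
`T = (A, u)` with payoffs bounded in `[0,1]` and a best-response function `σT`. -/
def CDLm (μ : Measure (ℝ × Bool)) : ℝ :=
  sSup {c : ℝ | ∃ (A : Type) (u : A → Bool → ℝ) (σT : ℝ → A),
    (∀ a y, u a y ∈ Set.Icc (0 : ℝ) 1) ∧ IsBestResponse u σT ∧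
    MeasurableStrategy u σT ∧ c = CFDLm μ u σT}

open scoped ENNReal NNReal

def IsSubgradientOn (G s : ℝ → ℝ) (S : Set ℝ) : Prop :=
  ∀ x ∈ S, ∀ y ∈ S, G x + s x * (y - x) ≤ G y

namespace IsSubgradientOn

variable {G s : ℝ → ℝ} {S : Set ℝ}

lemma mono (h : IsSubgradientOn G s S) {T : Set ℝ} (hT : T ⊆ S) : IsSubgradientOn G s T :=
  fun x hx y hy => h x (hT hx) y (hT hy)

lemma convexOn (h : IsSubgradientOn G s S) (hS : Convex ℝ S) : ConvexOn ℝ S G := by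
  refine ⟨hS, fun x hx y hy a b ha hb hab => ?_⟩
  set z := a • x + b • y
  have hz : z ∈ S := hS hx hy ha hb hab
  calc G z = a * (G z + s z * (x - z)) + b * (G z + s z * (y - z)) := by
        simp only [z, smul_eq_mul]; linear_combination (s z * (a * x + b * y) - G z) * hab
    _ ≤ a * G x + b * G y := by gcongr <;> [exact h z hz x hx; exact h z hz y hy]

lemma monotoneOn (h : IsSubgradientOn G s S) : MonotoneOn s S := by
  intro x hx y hy hxy
  rcases hxy.eq_or_lt with rfl | hlt
  · rfl
  · nlinarith [h x hx y hy, h y hy x hx]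

lemma lipschitzOnWith (h : IsSubgradientOn G s S) {K : ℝ≥0} (hs : ∀ x ∈ S, |s x| ≤ K) :
    LipschitzOnWith K G S := by
  refine LipschitzOnWith.of_le_add_mul K fun x hx y hy => ?_
  calc G x ≤ G y + s x * (x - y) := by linarith [h x hx y hy]
    _ ≤ G y + |s x| * |x - y| := by grw [← abs_mul, ← le_abs_self]
    _ ≤ G y + K * dist x y := by grw [hs x hx, Real.dist_eq]

lemma le_derivWithin_Ioi (h : IsSubgradientOn G s S) (hS : Convex ℝ S) {x : ℝ}
    (hx : x ∈ interior S) : s x ≤ derivWithin G (Ioi x) x := by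
  rw [(h.convexOn hS).rightDeriv_eq_sInf_slope_of_mem_interior hx]
  obtain ⟨y, hyS, hxy⟩ := Filter.nonempty_of_mem <| Filter.inter_mem
    (mem_nhdsWithin_of_mem_nhds (mem_interior_iff_mem_nhds.1 hx)) (self_mem_nhdsWithin (s := Ioi x))
  refine le_csInf ⟨_, mem_image_of_mem _ (⟨hyS, hxy⟩ : y ∈ {y | y ∈ S ∧ x < y})⟩ ?_
  rintro _ ⟨y, ⟨hy, hxy⟩, rfl⟩
  rw [slope_def_field, le_div_iff₀ (sub_pos.2 hxy)]
  linarith [h x (interior_subset hx) y hy]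

lemma integral_le_sub {a b : ℝ} (h : IsSubgradientOn G s (Icc a b)) (hab : a ≤ b) :
    ∫ x in a..b, s x ≤ G b - G a := by
  have hmono := h.monotoneOn
  let K : ℝ≥0 := ⟨max |s a| |s b|, by positivity⟩
  have hcont : ContinuousOn G (Icc a b) := (h.lipschitzOnWith (K := K) fun x hx =>
    abs_le_max_abs_abs (hmono ⟨le_rfl, hab⟩ hx hx.1) (hmono hx ⟨hab, le_rfl⟩ hx.2)).continuousOn
  have hinterior : ∀ x ∈ Ioo a b, x ∈ interior (Icc a b) := by simp
  exact intervalIntegral.integral_le_sub_of_hasDeriv_right_of_le hab hcont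
    (fun x hx => (h.convexOn (convex_Icc a b)).hasDerivWithinAt_rightDeriv_of_mem_interior
      (hinterior x hx))
    (hmono.integrableOn_isCompact isCompact_Icc)
    (fun x hx => h.le_derivWithin_Ioi (convex_Icc a b) (hinterior x hx))

end IsSubgradientOn

lemma LipschitzOnWith.abs_intervalIntegral_sub_mul_le {G : ℝ → ℝ} {K : ℝ≥0} {a b : ℝ}
    (hG : LipschitzOnWith K G (Icc a b)) (hab : a ≤ b) :
    |(∫ x in a..b, G x) - (b - a) * G b| ≤ K * (b - a) ^ 2 / 2 := by
  have hGc : ContinuousOn G (uIcc a b) := by rw [uIcc_of_le hab]; exact hG.continuousOn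
  have hcont : ContinuousOn (fun x => G x - G b) (uIcc a b) := hGc.sub continuousOn_const
  calc |(∫ x in a..b, G x) - (b - a) * G b| = |∫ x in a..b, (G x - G b)| := by
        rw [intervalIntegral.integral_sub hGc.intervalIntegrable intervalIntegrable_const,
          intervalIntegral.integral_const, smul_eq_mul]
    _ ≤ ∫ x in a..b, |G x - G b| := intervalIntegral.abs_integral_le_integral_abs hab
    _ ≤ ∫ x in a..b, K * (b - x) := by
        refine intervalIntegral.integral_mono_on hab hcont.abs.intervalIntegrable
          ((by fun_prop : Continuous fun x : ℝ => K * (b - x)).intervalIntegrable a b)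
          fun x hx => ?_
        rw [← Real.dist_eq, ← abs_of_nonneg (sub_nonneg.2 hx.2), ← Real.dist_eq, dist_comm b]
        exact hG.dist_le_mul x hx b ⟨hab, le_rfl⟩
    _ = K * (b - a) ^ 2 / 2 := by
        rw [intervalIntegral.integral_const_mul,
          intervalIntegral.integral_comp_sub_left (fun x => x), integral_id]
        ring

lemma IsSubgradientOn.integral_comp_sub_sub_integral_le_sq {G s : ℝ → ℝ}
    (h : IsSubgradientOn G s (Icc 0 1)) (hs : ∀ x ∈ Icc (0 : ℝ) 1, |s x| ≤ 1) {ε : ℝ}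
    (hε₀ : 0 ≤ ε) (hε₁ : ε ≤ 1) :
    (∫ v in ε..1, G (v - ε)) - ∫ v in ε..1, (G v - ε * s v) ≤ ε ^ 2 := by
  have hG : LipschitzOnWith 1 G (Icc 0 1) := h.lipschitzOnWith (by simpa using hs)
  have hGi : ∀ a ∈ Icc (0 : ℝ) 1, ∀ b ∈ Icc (0 : ℝ) 1, IntervalIntegrable G volume a b :=
    fun a ha b hb => (hG.continuousOn.mono (uIcc_subset_Icc ha hb)).intervalIntegrable
  have hε : ε ∈ Icc (0 : ℝ) 1 := ⟨hε₀, hε₁⟩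
  have hε' : 1 - ε ∈ Icc (0 : ℝ) 1 := ⟨by linarith, by linarith⟩
  have h0 : (0 : ℝ) ∈ Icc (0 : ℝ) 1 := ⟨le_rfl, zero_le_one⟩
  have h1 : (1 : ℝ) ∈ Icc (0 : ℝ) 1 := ⟨zero_le_one, le_rfl⟩
  have hshift : ∫ v in ε..1, G (v - ε) = ∫ v in 0..1 - ε, G v := by
    rw [intervalIntegral.integral_comp_sub_right, sub_self]
  have htangent : ∫ v in ε..1, (G v - ε * s v) = (∫ v in ε..1, G v) - ε * ∫ v in ε..1, s v := by
    rw [intervalIntegral.integral_sub (hGi ε hε 1 h1)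
      ((h.monotoneOn.mono (uIcc_subset_Icc hε h1)).intervalIntegrable.const_mul ε),
      intervalIntegral.integral_const_mul]
  have hslope := mul_le_mul_of_nonneg_left
    ((h.mono (Icc_subset_Icc hε₀ le_rfl)).integral_le_sub hε₁) hε₀
  have hleft := intervalIntegral.integral_add_adjacent_intervals (hGi 0 h0 ε hε) (hGi ε hε 1 h1)
  have hright := intervalIntegral.integral_add_adjacent_intervals
    (hGi 0 h0 (1 - ε) hε') (hGi (1 - ε) hε' 1 h1)
  have hhead := abs_le.1 ((hG.mono (Icc_subset_Icc le_rfl hε₁)).abs_intervalIntegral_sub_mul_le hε₀)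
  have htail := abs_le.1
    ((hG.mono (Icc_subset_Icc hε'.1 le_rfl)).abs_intervalIntegral_sub_mul_le hε'.2)
  simp only [NNReal.coe_one, sub_zero, sub_sub_cancel] at hhead htail
  rw [hshift, htangent]
  linarith

lemma lintegral_bern (r : ℝ) (f : Bool → ℝ≥0∞) :
    ∫⁻ y, f y ∂bern r = ENNReal.ofReal r * f true + ENNReal.ofReal (1 - r) * f false := by
  simp [bern, lintegral_add_measure, lintegral_smul_measure, lintegral_dirac]

lemma map_bern_prodMk (r v : ℝ) :
    (bern r).map (fun y => (v, y)) =
      ENNReal.ofReal r • Measure.dirac (v, true) +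
        ENNReal.ofReal (1 - r) • Measure.dirac (v, false) := by
  simp [bern, Measure.map_add _ _ measurable_prodMk_left, Measure.map_smul,
    Measure.map_dirac' measurable_prodMk_left]

lemma measurable_map_bern_prodMk (ε : ℝ) :
    Measurable fun v : ℝ => (bern (v - ε)).map fun y => (v, y) := by
  simp_rw [map_bern_prodMk]
  refine Measure.measurable_of_measurable_coe _ fun s hs => ?_
  simp only [Measure.add_apply, Measure.smul_apply, smul_eq_mul, Measure.dirac_apply' _ hs]
  fun_prop

lemma lintegral_D2 (ε : ℝ) {f : ℝ × Bool → ℝ≥0∞} (hf : Measurable f) :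
    ∫⁻ z, f z ∂D2 ε = (ENNReal.ofReal (1 - ε))⁻¹ * ∫⁻ v in Icc ε 1,
      (ENNReal.ofReal (v - ε) * f (v, true) + ENNReal.ofReal (1 - (v - ε)) * f (v, false)) := by
  rw [D2, Measure.lintegral_bind (measurable_map_bern_prodMk ε).aemeasurable hf.aemeasurable,
    lintegral_smul_measure]
  simp_rw [lintegral_map hf measurable_prodMk_left, lintegral_bern]
  rfl

lemma ae_fst_mem_Icc_D2 (ε : ℝ) : ∀ᵐ z ∂D2 ε, z.1 ∈ Icc ε 1 := by
  have hs : MeasurableSet {z : ℝ × Bool | z.1 ∉ Icc ε 1} :=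
    (measurableSet_Icc.compl).preimage measurable_fst
  rw [ae_iff, D2, Measure.bind_apply hs (measurable_map_bern_prodMk ε).aemeasurable,
    lintegral_smul_measure, setLIntegral_congr_fun measurableSet_Icc (g := 0)]
  · simp
  · intro v hv
    simp [map_bern_prodMk, hv.1, hv.2]

lemma ofReal_add_ofReal_one_sub {r : ℝ} (hr : r ∈ Icc (0 : ℝ) 1) :
    ENNReal.ofReal r + ENNReal.ofReal (1 - r) = 1 := by
  rw [← ENNReal.ofReal_add hr.1 (sub_nonneg.2 hr.2)]
  simp

lemma isProbabilityMeasure_D2 {ε : ℝ} (hε₀ : 0 ≤ ε) (hε₁ : ε < 1) :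
    IsProbabilityMeasure (D2 ε) := by
  have hweight : ∀ v ∈ Icc ε 1, ENNReal.ofReal (v - ε) * 1 + ENNReal.ofReal (1 - (v - ε)) * 1 = 1 :=
    fun v hv => by
      have hr : v - ε ∈ Icc (0 : ℝ) 1 := ⟨by linarith [hv.1], by linarith [hv.2]⟩
      simpa using ofReal_add_ofReal_one_sub hr
  constructor
  rw [← lintegral_one, lintegral_D2 ε measurable_const,
    setLIntegral_congr_fun measurableSet_Icc hweight, setLIntegral_one, Real.volume_Icc]
  exact ENNReal.inv_mul_cancel (by simpa using hε₁) ENNReal.ofReal_ne_top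

lemma integral_D2 {ε : ℝ} (hε₀ : 0 ≤ ε) (hε₁ : ε ≤ 1) {F : ℝ × Bool → ℝ} (hF : Measurable F)
    (hF₀ : ∀ v ∈ Icc ε 1, ∀ y, 0 ≤ F (v, y)) :
    ∫ z, F z ∂D2 ε = (1 - ε)⁻¹ *
      ∫ v in Icc ε 1, ((v - ε) * F (v, true) + (1 - (v - ε)) * F (v, false)) := by
  have hv₀ : ∀ v ∈ Icc ε 1, 0 ≤ v - ε := fun v hv => sub_nonneg.2 hv.1
  have hv₁ : ∀ v ∈ Icc ε 1, 0 ≤ 1 - (v - ε) := fun v hv => by linarith [hv.2]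
  rw [integral_eq_lintegral_of_nonneg_ae
      ((ae_fst_mem_Icc_D2 ε).mono fun z hz => hF₀ z.1 hz z.2) hF.aestronglyMeasurable,
    lintegral_D2 ε (f := fun z => ENNReal.ofReal (F z)) (by fun_prop),
    integral_eq_lintegral_of_nonneg_ae ((ae_restrict_mem measurableSet_Icc).mono fun v hv =>
      add_nonneg (mul_nonneg (hv₀ v hv) (hF₀ v hv _)) (mul_nonneg (hv₁ v hv) (hF₀ v hv _)))
      (by fun_prop),
    ENNReal.toReal_mul, ENNReal.toReal_inv, ENNReal.toReal_ofReal (sub_nonneg.2 hε₁)]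
  congr 2
  refine setLIntegral_congr_fun measurableSet_Icc fun v hv => ?_
  rw [ENNReal.ofReal_add (mul_nonneg (hv₀ v hv) (hF₀ v hv _)) (mul_nonneg (hv₁ v hv) (hF₀ v hv _)),
    ENNReal.ofReal_mul (hv₀ v hv), ENNReal.ofReal_mul (hv₁ v hv)]

lemma measurable_Yf : Measurable Yf :=
  (measurable_from_top (f := fun b : Bool => if b then (1 : ℝ) else 0)).comp measurable_snd

lemma condExp_Yf_D2 {ε : ℝ} (hε₀ : 0 ≤ ε) (hε₁ : ε < 1) :
    (D2 ε)[Yf|predσ] =ᵐ[D2 ε] fun z => z.1 - ε := by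
  have := isProbabilityMeasure_D2 hε₀ hε₁
  have hfst : Measurable[predσ] Prod.fst := comap_measurable Prod.fst
  have hint : Integrable (fun z : ℝ × Bool => z.1 - ε) (D2 ε) :=
    Integrable.of_bound (by fun_prop) 1 <| (ae_fst_mem_Icc_D2 ε).mono fun z hz => by
      rw [Real.norm_eq_abs, abs_le]; constructor <;> linarith [hz.1, hz.2]
  refine (ae_eq_condExp_of_forall_setIntegral_eq measurable_fst.comap_le ?_
    (fun s _ _ => hint.integrableOn) ?_ ((hfst.sub_const ε).aestronglyMeasurable)).symm
  · exact Integrable.of_bound measurable_Yf.aestronglyMeasurable 1 <| ae_of_all _ fun z => by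
      unfold Yf; split <;> simp
  · rintro _ ⟨B, hB, rfl⟩ _
    have hsB : MeasurableSet (Prod.fst ⁻¹' B : Set (ℝ × Bool)) := measurable_fst hB
    rw [← integral_indicator hsB, ← integral_indicator hsB,
      integral_D2 hε₀ hε₁.le ((measurable_fst.sub_const ε).indicator hsB) fun v hv y => ?_,
      integral_D2 hε₀ hε₁.le (measurable_Yf.indicator hsB) fun v hv y => ?_]
    · congr 1
      refine setIntegral_congr_fun measurableSet_Icc fun v hv => ?_
      by_cases hvB : v ∈ B
      · simp only [mem_preimage, hvB, indicator_of_mem, Yf, if_true, Bool.false_eq_true,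
          if_false, mul_one, mul_zero, add_zero]
        ring
      · simp [hvB]
    · unfold Yf; exact indicator_nonneg (fun z _ => by split <;> simp) _
    · exact indicator_nonneg (fun z hz => sub_nonneg.2 hv.1) _

lemma ECEm_D2 {ε : ℝ} (hε₀ : 0 ≤ ε) (hε₁ : ε < 1) : ECEm (D2 ε) = ε := by
  have := isProbabilityMeasure_D2 hε₀ hε₁
  rw [ECEm, integral_congr_ae ((condExp_Yf_D2 hε₀ hε₁).mono fun z hz => by
    rw [hz, sub_sub_cancel_left, abs_neg, abs_of_nonneg hε₀])]
  simp

section DecisionTask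

variable {A : Type} {u : A → Bool → ℝ}

def expectedPayoff (u : A → Bool → ℝ) (v : ℝ) (a : A) : ℝ :=
  v * u a true + (1 - v) * u a false

lemma abs_sub_le_one_of_mem_Icc (hu : ∀ a y, u a y ∈ Icc (0 : ℝ) 1) (a : A) :
    |u a true - u a false| ≤ 1 :=
  abs_sub_le_of_nonneg_of_le (hu a true).1 (hu a true).2 (hu a false).1 (hu a false).2

lemma expectedPayoff_eq_add (v w : ℝ) (a : A) :
    expectedPayoff u w a = expectedPayoff u v a + (u a true - u a false) * (w - v) := by
  unfold expectedPayoff; ring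

lemma IsBestResponse.isSubgradientOn {σT : ℝ → A} (h : IsBestResponse u σT) :
    IsSubgradientOn (fun v => expectedPayoff u v (σT v))
      (fun v => u (σT v) true - u (σT v) false) (Icc 0 1) := fun x _ y hy =>
  (expectedPayoff_eq_add x y (σT x)).symm.trans_le (h y hy (σT x))

lemma payoffm_D2 {ε : ℝ} (hε₀ : 0 ≤ ε) (hε₁ : ε ≤ 1) (hu : ∀ a y, 0 ≤ u a y) {σ : ℝ → A}
    (hσ : MeasurableStrategy u σ) :
    payoffm (D2 ε) u σ = (1 - ε)⁻¹ * ∫ v in ε..1, expectedPayoff u (v - ε) (σ v) := by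
  rw [payoffm, integral_D2 hε₀ hε₁
      (measurable_from_prod_countable_left (f := fun z => u (σ z.1) z.2) hσ) fun _ _ _ => hu _ _,
    integral_Icc_eq_integral_Ioc, ← intervalIntegral.integral_of_le hε₁]
  rfl

lemma payoffm_D2_le {ε : ℝ} (hε₀ : 0 ≤ ε) (hε₁ : ε < 1) (hu : ∀ a y, u a y ∈ Icc (0 : ℝ) 1)
    {σT σ : ℝ → A} (hbr : IsBestResponse u σT) (hσ : MeasurableStrategy u σ) :
    payoffm (D2 ε) u σ ≤ (1 - ε)⁻¹ * ∫ v in ε..1, expectedPayoff u (v - ε) (σT (v - ε)) := by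
  have hV : ContinuousOn (fun v => expectedPayoff u v (σT v)) (Icc 0 1) :=
    (hbr.isSubgradientOn.lipschitzOnWith (K := 1) fun v _ => by
      simpa using abs_sub_le_one_of_mem_Icc hu (σT v)).continuousOn
  have hVε : ContinuousOn (fun v => expectedPayoff u (v - ε) (σT (v - ε))) (uIcc ε 1) :=
    hV.comp (by fun_prop) fun v hv => by
      rw [uIcc_of_le hε₁.le] at hv; exact ⟨by linarith [hv.1], by linarith [hv.2]⟩
  rw [payoffm_D2 hε₀ hε₁.le (fun a y => (hu a y).1) hσ]
  refine mul_le_mul_of_nonneg_left ?_ (inv_nonneg.2 (by linarith))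
  rw [intervalIntegral.integral_of_le hε₁.le, intervalIntegral.integral_of_le hε₁.le]
  refine integral_mono_of_nonneg ((ae_restrict_mem measurableSet_Ioc).mono fun v hv => ?_)
    ((intervalIntegrable_iff_integrableOn_Ioc_of_le hε₁.le).1 hVε.intervalIntegrable)
    ((ae_restrict_mem measurableSet_Ioc).mono fun v hv =>
      hbr (v - ε) ⟨by linarith [hv.1], by linarith [hv.2]⟩ (σ v))
  exact add_nonneg (mul_nonneg (by linarith [hv.1]) (hu _ _).1)
    (mul_nonneg (by linarith [hv.2]) (hu _ _).1)

lemma CFDLm_D2_le {ε : ℝ} (hε₀ : 0 ≤ ε) (hε₁ : ε < 1) (hu : ∀ a y, u a y ∈ Icc (0 : ℝ) 1)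
    {σT : ℝ → A} (hbr : IsBestResponse u σT) (hmT : MeasurableStrategy u σT) :
    CFDLm (D2 ε) u σT ≤ ε ^ 2 / (1 - ε) := by
  set V := fun v => expectedPayoff u v (σT v)
  set s := fun v => u (σT v) true - u (σT v) false
  have hT : payoffm (D2 ε) u σT = (1 - ε)⁻¹ * ∫ v in ε..1, (V v - ε * s v) := by
    rw [payoffm_D2 hε₀ hε₁.le (fun a y => (hu a y).1) hmT]
    congr 1
    refine intervalIntegral.integral_congr fun v _ => ?_
    simp only [V, s, expectedPayoff_eq_add v (v - ε)]
    ring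
  have hshift := hbr.isSubgradientOn.integral_comp_sub_sub_integral_le_sq
    (fun v _ => abs_sub_le_one_of_mem_Icc hu (σT v)) hε₀ hε₁.le
  calc CFDLm (D2 ε) u σT
      ≤ (1 - ε)⁻¹ * (∫ v in ε..1, V (v - ε)) - (1 - ε)⁻¹ * ∫ v in ε..1, (V v - ε * s v) := by
        rw [CFDLm, hT]
        refine sub_le_sub_right (csSup_le ?_ ?_) _
        · exact ⟨_, σT, hmT, rfl⟩
        · rintro _ ⟨σ, hσ, rfl⟩
          exact payoffm_D2_le hε₀ hε₁ hu hbr hσ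
    _ = (1 - ε)⁻¹ * ((∫ v in ε..1, V (v - ε)) - ∫ v in ε..1, (V v - ε * s v)) := by ring
    _ ≤ (1 - ε)⁻¹ * ε ^ 2 := mul_le_mul_of_nonneg_left hshift (inv_nonneg.2 (by linarith))
    _ = ε ^ 2 / (1 - ε) := by ring

end DecisionTask

/-- for `ε ∈ (0, 1/10)`, with `x` uniform on `[ε,1]`, `y` Bernoulli
(`x - ε`) given `x`, and the identity predictor, `ECE = ε` while
`CDL ≤ ε²/(1 - ε)`: the CDL can be quadratically smaller than the ECE. -/
theorem cdl_quadratically_smaller_than_ece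
    (ε : ℝ) (hε : ε ∈ Set.Ioo (0 : ℝ) (1 / 10)) :
    ECEm (D2 ε) = ε ∧ CDLm (D2 ε) ≤ ε ^ 2 / (1 - ε) := by
  obtain ⟨hε₀, hε₁⟩ := hε
  refine ⟨ECEm_D2 hε₀.le (by linarith), Real.sSup_le ?_ (div_nonneg (sq_nonneg ε) (by linarith))⟩
  rintro _ ⟨A, u, σT, hu, hbr, hmT, rfl⟩
  exact CFDLm_D2_le hε₀.le (by linarith) hu hbr hmT
end
end

section
/- Let X be a finite set, D a probability distribution on X × {0,1} with random pair (x, y), and p : X → [0,1] a predictor with recalibration p̂. Then for any decision task T = (A, u) with best-response function σ_T, max_{σ : [0,1] → A} E[u(σ(p(x)), y)] = E[u(σ_T(p̂(x)), y)]; that is, the maximum expected payoff achievable by post-processing the predictions of p equals the payoff of best-responding to the recalibrated predictor. -/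
open scoped Classical
open Finset Set

noncomputable section

/-- the maximum expected payoff achievable by post-processing the
predictions of `p` is attained by best-responding to the recalibration `p̂` of `p`:
`max_{σ : [0,1] → A} E[u(σ(p(x)), y)] = E[u(σT(p̂(x)), y)]`. -/
theorem max_payoff_eq_recalibrated_payoff
    {X : Type} [Fintype X] (D : X × Bool → ℝ) (hD : IsDistribution D)
    (p : X → ℝ) (hp : IsPredictor p)
    (A : Type) (u : A → Bool → ℝ) (σT : ℝ → A) (hBR : IsBestResponse u σT) :
    IsGreatest {e : ℝ | ∃ σ : ℝ → A, e = payoff D p u σ}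
      (expval D (fun z => u (σT (phat D p z.1)) z.2)) := by
  obtain ⟨hD0, hD1⟩ := hD
  -- the per-level-set inequality
  have aux : ∀ (T F : ℝ), 0 ≤ T → 0 ≤ F → ∀ a : A,
      T * u a true + F * u a false ≤
        T * u (σT (T / (F + T))) true + F * u (σT (T / (F + T))) false := by
    intro T F hT hF a
    rcases eq_or_lt_of_le (add_nonneg hF hT) with h | h
    · have hT0 : T = 0 := by linarith
      have hF0 : F = 0 := by linarith
      simp [hT0, hF0]
    · set w : ℝ := T / (F + T) with hw
      have hw0 : 0 ≤ w := div_nonneg hT h.le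
      have hw1 : w ≤ 1 := (div_le_one h).mpr (by linarith)
      have hineq := hBR w ⟨hw0, hw1⟩ a
      have e1 : ∀ b : A, (F + T) * (w * u b true + (1 - w) * u b false) =
          T * u b true + F * u b false := by
        intro b
        have h3 : (F + T) * (T / (F + T)) = T := by field_simp
        have : (F + T) * (w * u b true + (1 - w) * u b false) =
            ((F + T) * (T / (F + T))) * u b true +
              ((F + T) - (F + T) * (T / (F + T))) * u b false := by rw [hw]; ring
        rw [this, h3]; ring
      rw [← e1 a, ← e1 (σT w)]
      exact mul_le_mul_of_nonneg_left hineq h.le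
  -- rewrite any payoff as a sum over level sets
  set g : ℝ → ℝ := fun v =>
    (∑ x' : X, if p x' = v then D (x', true) else 0) /
      (∑ x' : X, if p x' = v then massx D x' else 0) with hg
  have hphat : ∀ x : X, phat D p x = g (p x) := fun x => rfl
  set T : ℝ → ℝ := fun v => ∑ x ∈ Finset.univ.filter (fun x => p x = v), D (x, true) with hTdef
  set F : ℝ → ℝ := fun v => ∑ x ∈ Finset.univ.filter (fun x => p x = v), D (x, false) with hFdef
  have hgv : ∀ v : ℝ, g v = T v / (F v + T v) := by
    intro v
    have h1 : (∑ x' : X, if p x' = v then D (x', true) else 0) = T v := by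
      simp only [hTdef, Finset.sum_filter]
    have h2 : (∑ x' : X, if p x' = v then massx D x' else 0) = F v + T v := by
      simp only [hFdef, hTdef, Finset.sum_filter, ← Finset.sum_add_distrib]
      exact Finset.sum_congr rfl fun x _ => by by_cases h : p x = v <;> simp [h, massx]
    rw [hg]; simp only [h1, h2]
  have key : ∀ σ' : ℝ → A, payoff D p u σ' =
      ∑ v ∈ Finset.univ.image p, (T v * u (σ' v) true + F v * u (σ' v) false) := by
    intro σ'
    rw [payoff, expval, Fintype.sum_prod_type]
    rw [← Finset.sum_fiberwise_of_maps_to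
      (fun x _ => Finset.mem_image_of_mem p (Finset.mem_univ x))
      (fun x => ∑ b : Bool, D (x, b) * u (σ' (p x)) b)]
    refine Finset.sum_congr rfl fun v hv => ?_
    rw [hTdef, hFdef, Finset.sum_mul, Finset.sum_mul, ← Finset.sum_add_distrib]
    refine Finset.sum_congr rfl fun x hx => ?_
    have hpx : p x = v := (Finset.mem_filter.mp hx).2
    simp [Fintype.sum_bool, hpx]
  constructor
  · exact ⟨fun v => σT (g v), by simp only [payoff, expval, hphat]⟩
  · rintro e ⟨σ', rfl⟩
    have htarget : expval D (fun z => u (σT (phat D p z.1)) z.2) =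
        payoff D p u (fun v => σT (g v)) := by
      simp only [payoff, expval, hphat]
    rw [htarget, key σ', key]
    refine Finset.sum_le_sum fun v _ => ?_
    have hT : 0 ≤ T v := Finset.sum_nonneg fun x _ => hD0 _
    have hF : 0 ≤ F v := Finset.sum_nonneg fun x _ => hD0 _
    have := aux (T v) (F v) hT hF (σ' v)
    rwa [hgv v]
end
end

section
/- Let X be a finite set, D* a probability distribution on X × {0,1} with random pair (x, y*), and p : X → [0,1] a predictor, with J* the joint distribution of (p(x), y*). Then the upper distance to calibration satisfies dCE_upper(J*) = min_{κ ∈ K(J*)} E_{D*}|κ(p(x)) − p(x)|; equivalently: (i) every realization (X', D', p') of J* satisfies dCE(p', D') ≤ min_{κ ∈ K(J*)} E_{D*}|κ(p(x)) − p(x)|, and (ii) there exists a realization of J* whose distance to calibration equals this minimum. -/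
/-!
Whether a post-processing `κ ∘ p` is perfectly calibrated, and its distance `E|κ(p(x)) - p(x)|`
to `p`, only depend on the joint law `J*` of `(p(x), y*)`. Hence every calibrated
post-processing of `p` transfers to every realization `(X', D', p')` of `J*`, where it is a
perfectly calibrated predictor at the same distance from `p'`; this bounds `dCE(p', D')` from
above. On the realization whose points are the values of `p` themselves, every predictor is a
post-processing, so there the bound is attained.
-/

open scoped Classical
open Finset Set

noncomputable section

/-- The expected `ℓ1` distance `d(p1, p2) = E|p1(x) - p2(x)|` between predictors. -/
def distp {X : Type} [Fintype X] (D : X × Bool → ℝ) (p1 p2 : X → ℝ) : ℝ :=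
  ∑ x : X, massx D x * |p1 x - p2 x|

/-- The distance to calibration: the minimal expected `ℓ1` distance from `p` to a
perfectly calibrated predictor (on the same space, with values in `[0,1]`). -/
def dCE {X : Type} [Fintype X] (D : X × Bool → ℝ) (p : X → ℝ) : ℝ :=
  sInf {c : ℝ | ∃ q : X → ℝ, IsPredictor q ∧ PerfectlyCalibrated D q ∧ c = distp D p q}

/-- The joint distribution of `(p(x), y)`, as a density on `ℝ × Bool`. -/
def jointOf {X : Type} [Fintype X] (D : X × Bool → ℝ) (p : X → ℝ) : ℝ × Bool → ℝ :=
  fun w => ∑ x : X, if p x = w.1 then D (x, w.2) else 0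

/-- A realization of a joint prediction-label distribution `J` on `[0,1] × {0,1}`:
a (finite) set `carrier`, a distribution `D'` on `carrier × Bool`, and a predictor
`p'` whose joint prediction-label distribution is `J`. -/
structure Realization (J : ℝ × Bool → ℝ) where
  carrier : Type
  [inst : Fintype carrier]
  D' : carrier × Bool → ℝ
  p' : carrier → ℝ
  hD' : IsDistribution D'
  hp' : IsPredictor p'
  hJ : jointOf D' p' = J

/-- The distance to calibration of a realization. -/
def Realization.dce {J : ℝ × Bool → ℝ} (R : Realization J) : ℝ :=
  @dCE R.carrier R.inst R.D' R.p'

variable {X X' : Type} [Fintype X] [Fintype X']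

def calibrationCosts (D : X × Bool → ℝ) (p : X → ℝ) : Set ℝ :=
  {c | ∃ q : X → ℝ, IsPredictor q ∧ PerfectlyCalibrated D q ∧ c = distp D p q}

def postProcessingCosts (D : X × Bool → ℝ) (p : X → ℝ) : Set ℝ :=
  {c | ∃ κ : ℝ → ℝ, (∀ v ∈ Set.Icc (0 : ℝ) 1, κ v ∈ Set.Icc (0 : ℝ) 1) ∧
    PerfectlyCalibrated D (fun x => κ (p x)) ∧ c = ∑ x : X, massx D x * |κ (p x) - p x|}

theorem sum_massx_eq_one {D : X × Bool → ℝ} (hD : IsDistribution D) :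
    ∑ x, massx D x = 1 := by
  rw [← hD.2, Fintype.sum_prod_type]
  exact sum_congr rfl fun x _ => by rw [Fintype.sum_bool, massx, add_comm]

theorem calibrationCosts_bddBelow {D : X × Bool → ℝ} (hD : ∀ z, 0 ≤ D z) (p : X → ℝ) :
    BddBelow (calibrationCosts D p) := by
  refine ⟨0, ?_⟩
  rintro _ ⟨q, -, -, rfl⟩
  exact sum_nonneg fun x _ => mul_nonneg (add_nonneg (hD _) (hD _)) (abs_nonneg _)

theorem perfectlyCalibrated_iff_forall (D : X × Bool → ℝ) (q : X → ℝ) :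
    PerfectlyCalibrated D q ↔ ∀ v : ℝ,
      (∑ x, if q x = v then D (x, true) else 0) =
        v * ∑ x, if q x = v then massx D x else 0 := by
  refine ⟨fun h v => ?_, fun h v _ => h v⟩
  by_cases hv : v ∈ Set.range q
  · exact h v hv
  · have hq : ∀ x, q x ≠ v := fun x hx => hv ⟨x, hx⟩
    simp [hq]

theorem sum_mul_comp_eq_sum_jointOf (D : X × Bool → ℝ) (p : X → ℝ) {T : Finset ℝ}
    (hT : ∀ x, p x ∈ T) (y : Bool) (g : ℝ → ℝ) :
    ∑ x, D (x, y) * g (p x) = ∑ v ∈ T, jointOf D p (v, y) * g v := by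
  rw [← sum_fiberwise_of_maps_to (fun x _ => hT x)]
  refine sum_congr rfl fun v _ => ?_
  rw [jointOf, sum_mul, sum_filter]
  refine sum_congr rfl fun x _ => ?_
  split_ifs with h <;> simp [h]

section Transfer

variable {D : X × Bool → ℝ} {p : X → ℝ} {D' : X' × Bool → ℝ} {p' : X' → ℝ}

theorem sum_mul_comp_eq_of_jointOf_eq (hJ : jointOf D p = jointOf D' p') (y : Bool)
    (g : ℝ → ℝ) : ∑ x, D (x, y) * g (p x) = ∑ x', D' (x', y) * g (p' x') := by
  let T := Finset.univ.image p ∪ Finset.univ.image p'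
  rw [sum_mul_comp_eq_sum_jointOf D p (T := T) (fun x => by simp [T]),
    sum_mul_comp_eq_sum_jointOf D' p' (T := T) (fun x' => by simp [T]), hJ]

theorem sum_massx_mul_comp_eq_of_jointOf_eq (hJ : jointOf D p = jointOf D' p')
    (g : ℝ → ℝ) : ∑ x, massx D x * g (p x) = ∑ x', massx D' x' * g (p' x') := by
  simp only [massx, add_mul, sum_add_distrib, sum_mul_comp_eq_of_jointOf_eq hJ]

theorem perfectlyCalibrated_comp_iff_of_jointOf_eq (hJ : jointOf D p = jointOf D' p')
    (κ : ℝ → ℝ) :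
    PerfectlyCalibrated D (fun x => κ (p x)) ↔ PerfectlyCalibrated D' (fun x' => κ (p' x')) := by
  simp only [perfectlyCalibrated_iff_forall]
  refine forall_congr' fun v => ?_
  have hy := sum_mul_comp_eq_of_jointOf_eq hJ true fun w => if κ w = v then 1 else 0
  have hm := sum_massx_mul_comp_eq_of_jointOf_eq hJ fun w => if κ w = v then 1 else 0
  simp only [mul_boole] at hy hm
  rw [hy, hm]

theorem postProcessingCosts_subset_calibrationCosts (hp' : IsPredictor p')
    (hJ : jointOf D' p' = jointOf D p) :
    postProcessingCosts D p ⊆ calibrationCosts D' p' := by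
  rintro _ ⟨κ, hκ, hcal, rfl⟩
  refine ⟨fun x' => κ (p' x'), fun x' => hκ _ (hp' x'),
    (perfectlyCalibrated_comp_iff_of_jointOf_eq hJ.symm κ).1 hcal, ?_⟩
  rw [sum_massx_mul_comp_eq_of_jointOf_eq hJ.symm fun w => |κ w - w|]
  exact sum_congr rfl fun x' _ => by rw [abs_sub_comm]

end Transfer

theorem postProcessingCosts_nonempty {D : X × Bool → ℝ} (hD : IsDistribution D) (p : X → ℝ) :
    (postProcessingCosts D p).Nonempty := by
  set μ := ∑ x, D (x, true)
  have hμ : μ ≤ 1 := by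
    rw [← sum_massx_eq_one hD]
    exact sum_le_sum fun x _ => le_add_of_nonneg_left (hD.1 _)
  refine ⟨_, fun _ => μ, fun _ _ => ⟨sum_nonneg fun x _ => hD.1 _, hμ⟩, ?_, rfl⟩
  rintro _ ⟨x, rfl⟩
  simp [sum_massx_eq_one hD, μ]

theorem dCE_le_sInf_postProcessingCosts {D : X × Bool → ℝ} (hD : IsDistribution D)
    (p : X → ℝ) {D' : X' × Bool → ℝ} (hD' : ∀ z, 0 ≤ D' z) {p' : X' → ℝ}
    (hp' : IsPredictor p') (hJ : jointOf D' p' = jointOf D p) :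
    dCE D' p' ≤ sInf (postProcessingCosts D p) :=
  csInf_le_csInf (calibrationCosts_bddBelow hD' p') (postProcessingCosts_nonempty hD p)
    (postProcessingCosts_subset_calibrationCosts hp' hJ)

section RangeRealization

def rangeDist (D : X × Bool → ℝ) (p : X → ℝ) : (Finset.univ.image p) × Bool → ℝ :=
  fun w => jointOf D p (w.1, w.2)

variable {D : X × Bool → ℝ} {p : X → ℝ}

theorem isDistribution_rangeDist (hD : IsDistribution D) : IsDistribution (rangeDist D p) := by
  refine ⟨fun w => sum_nonneg fun x _ => ?_, ?_⟩
  · split_ifs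
    exacts [hD.1 _, le_rfl]
  · rw [← hD.2, Fintype.sum_prod_type_right, Fintype.sum_prod_type_right]
    refine sum_congr rfl fun y _ =>
      (Finset.sum_coe_sort (Finset.univ.image p) fun v => jointOf D p (v, y)).trans ?_
    simpa using (sum_mul_comp_eq_sum_jointOf D p
      (fun x => Finset.mem_image_of_mem p (mem_univ x)) y fun _ => 1).symm

theorem isPredictor_val_image (hp : IsPredictor p) :
    IsPredictor (Subtype.val : Finset.univ.image p → ℝ) := by
  rintro ⟨v, hv⟩
  obtain ⟨x, -, rfl⟩ := Finset.mem_image.1 hv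
  exact hp x

theorem jointOf_rangeDist : jointOf (rangeDist D p) Subtype.val = jointOf D p := by
  funext ⟨v, y⟩
  refine (Finset.sum_coe_sort (Finset.univ.image p)
    fun u => if u = v then jointOf D p (u, y) else 0).trans ?_
  rw [sum_ite_eq']
  split_ifs with hv
  · rfl
  · have hpv : ∀ x, p x ≠ v := fun x hx => hv (hx ▸ Finset.mem_image_of_mem p (mem_univ x))
    simp [jointOf, hpv]

theorem calibrationCosts_rangeDist (hp : IsPredictor p) :
    calibrationCosts (rangeDist D p) Subtype.val = postProcessingCosts D p := by
  refine subset_antisymm ?_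
    (postProcessingCosts_subset_calibrationCosts (isPredictor_val_image hp) jointOf_rangeDist)
  rintro _ ⟨q, hq, hcal, rfl⟩
  set κ := Function.extend Subtype.val q id
  have hκ : ∀ v : Finset.univ.image p, κ v = q v := Subtype.val_injective.extend_apply q id
  refine ⟨κ, fun v hv => ?_,
    (perfectlyCalibrated_comp_iff_of_jointOf_eq jointOf_rangeDist κ).1 (by simpa only [hκ]), ?_⟩
  · by_cases h : ∃ u : Finset.univ.image p, (u : ℝ) = v
    · obtain ⟨u, rfl⟩ := h
      exact (hκ u).symm ▸ hq u
    · rwa [show κ v = v from Function.extend_apply' q id v h]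
  · rw [← sum_massx_mul_comp_eq_of_jointOf_eq jointOf_rangeDist fun w => |κ w - w|]
    exact sum_congr rfl fun v _ => by rw [abs_sub_comm, hκ]

def rangeRealization (hD : IsDistribution D) (hp : IsPredictor p) : Realization (jointOf D p) where
  carrier := Finset.univ.image p
  D' := rangeDist D p
  p' := Subtype.val
  hD' := isDistribution_rangeDist hD
  hp' := isPredictor_val_image hp
  hJ := jointOf_rangeDist

end RangeRealization

/-- characterization of the upper distance to calibration: the
supremum of `dCE(p', D')` over all realizations of `J*` is attained, and equals
`min_{κ ∈ K(J*)} E|κ(p(x)) - p(x)|`, the least distance from `p` to a perfectly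
calibrated post-processing `κ ∘ p` of `p`. -/
theorem upper_dCE_eq_min_post_processing
    {X : Type} [Fintype X] (D : X × Bool → ℝ) (hD : IsDistribution D)
    (p : X → ℝ) (hp : IsPredictor p) :
    IsGreatest {c : ℝ | ∃ R : Realization (jointOf D p), c = R.dce}
      (sInf {c : ℝ | ∃ κ : ℝ → ℝ, (∀ v ∈ Set.Icc (0 : ℝ) 1, κ v ∈ Set.Icc (0 : ℝ) 1) ∧
        PerfectlyCalibrated D (fun x => κ (p x)) ∧
        c = ∑ x : X, massx D x * |κ (p x) - p x|}) := by
  refine ⟨⟨rangeRealization hD hp, (congrArg sInf (calibrationCosts_rangeDist hp)).symm⟩, ?_⟩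
  rintro _ ⟨R, rfl⟩
  let _ := R.inst
  exact dCE_le_sInf_postProcessingCosts hD p R.hD'.1 R.hp' R.hJ
end
end
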